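/- arXiv:1604.08299 — 14 statements merged into one kernel-verified Lean document; each statement's English description precedes it below -/
import Mathlib

section
/- Let Γ be a type-I strongly regular graph (conference graph), i.e. a strongly regular graph with parameters (v, k, λ, μ) = (4m+1, 2m, m−1, m) for some integer m ≥ 1, so that Γ has v = 4m+1 vertices. Suppose that 0 < frac(√v / 2) < 1/4 + (√v − √(v + 5/4))/2, where frac(a) = a − ⌊a⌋ denotes the fractional part. Then the clique number of Γ satisfies ω(Γ) ≤ ⌊√v − 1⌋. -/
open Finset SimpleGraph

private lemma consec_nonneg (z : ℤ) : 0 ≤ z * (z - 1) := by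
  rcases le_or_gt z 0 with h | h
  · nlinarith
  · nlinarith

private lemma boole_mul_boole {P Q : Prop} [Decidable P] [Decidable Q] :
    (if P then (1 : ℤ) else 0) * (if Q then (1 : ℤ) else 0)
      = if P ∧ Q then (1 : ℤ) else 0 := by
  by_cases hP : P <;> by_cases hQ : Q <;> simp [hP, hQ]

/-- Soicher-type counting inequality for cliques in strongly regular graphs:
for any clique `s` of size `c` and any integer `b`,
`0 ≤ c(k-c+1) + c(c-1)(l-c+2) - (2b+1)·c(k-c+1) + (v-c)·b(b+1)`. -/
private lemma soicher_ineq {V : Type*} [Fintype V] [DecidableEq V] (G : SimpleGraph V)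
    [DecidableRel G.Adj] {v k l μ : ℕ} (h : G.IsSRGWith v k l μ) {s : Finset V}
    (hs : G.IsClique s) (b : ℤ) :
    0 ≤ (s.card : ℤ) * ((k : ℤ) - s.card + 1)
        + (s.card : ℤ) * ((s.card : ℤ) - 1) * ((l : ℤ) - s.card + 2)
        - (2 * b + 1) * ((s.card : ℤ) * ((k : ℤ) - s.card + 1))
        + ((v : ℤ) - s.card) * (b * (b + 1)) := by
  set c : ℕ := s.card with hc
  -- degree facts
  have hdeg : ∀ x : V, (G.neighborFinset x).card = k := fun x => h.regular x
  -- neighbours inside the clique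
  have hins : ∀ x ∈ s, G.neighborFinset x ∩ s = s.erase x := by
    intro x hx
    ext z
    simp only [mem_inter, mem_neighborFinset, mem_erase]
    constructor
    · rintro ⟨ha, hzs⟩
      exact ⟨ha.ne', hzs⟩
    · rintro ⟨hzx, hzs⟩
      exact ⟨hs hx hzs (Ne.symm hzx), hzs⟩
  have hc1 : ∀ x ∈ s, 1 ≤ c := fun x hx => Finset.card_pos.mpr ⟨x, hx⟩
  -- number of neighbours outside the clique
  have key1 : ∀ x ∈ s, ((sᶜ.filter (fun y => G.Adj y x)).card : ℤ) = (k : ℤ) - c + 1 := by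
    intro x hx
    have hfe : sᶜ.filter (fun y => G.Adj y x) = G.neighborFinset x \ s := by
      ext y
      simp only [mem_filter, mem_compl, mem_sdiff, mem_neighborFinset]
      rw [adj_comm]
      tauto
    have hsum := Finset.card_inter_add_card_sdiff (G.neighborFinset x) s
    rw [hdeg x, hins x hx, Finset.card_erase_of_mem hx] at hsum
    have h1 : 1 ≤ c := hc1 x hx
    rw [hfe]
    have : ((c - 1 : ℕ) : ℤ) + ((G.neighborFinset x \ s).card : ℤ) = (k : ℤ) := by
      exact_mod_cast congrArg (Nat.cast : ℕ → ℤ) hsum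
    rw [Nat.cast_sub h1] at this
    push_cast at this ⊢
    linarith
  -- common neighbours outside the clique, for distinct clique vertices
  have key2 : ∀ x ∈ s, ∀ x' ∈ s, x ≠ x' →
      ((sᶜ.filter (fun y => G.Adj y x ∧ G.Adj y x')).card : ℤ) = (l : ℤ) - c + 2 := by
    intro x hx x' hx' hne
    have hadj : G.Adj x x' := hs hx hx' hne
    -- the common-neighbour finset has card l
    have hCN : (G.neighborFinset x ∩ G.neighborFinset x').card = l := by
      have h1 : (G.commonNeighbors x x').toFinset
          = G.neighborFinset x ∩ G.neighborFinset x' := by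
        ext z
        simp [mem_commonNeighbors]
      have h2 := h.of_adj x x' hadj
      rw [← Set.toFinset_card, h1] at h2
      exact h2
    -- inside the clique, common neighbours are exactly s minus {x, x'}
    have hin : (G.neighborFinset x ∩ G.neighborFinset x') ∩ s = (s.erase x).erase x' := by
      ext z
      simp only [mem_inter, mem_neighborFinset, mem_erase]
      constructor
      · rintro ⟨⟨h1, h2⟩, hzs⟩
        exact ⟨h2.ne', ⟨h1.ne', hzs⟩⟩
      · rintro ⟨hzx', hzx, hzs⟩
        exact ⟨⟨hs hx hzs (Ne.symm hzx), hs hx' hzs (Ne.symm hzx')⟩, hzs⟩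
    have hfe : sᶜ.filter (fun y => G.Adj y x ∧ G.Adj y x')
        = (G.neighborFinset x ∩ G.neighborFinset x') \ s := by
      ext y
      simp only [mem_filter, mem_compl, mem_sdiff, mem_inter, mem_neighborFinset]
      constructor
      · rintro ⟨hys, h1, h2⟩
        exact ⟨⟨h1.symm, h2.symm⟩, hys⟩
      · rintro ⟨⟨h1, h2⟩, hys⟩
        exact ⟨hys, h1.symm, h2.symm⟩
    have hsum := Finset.card_inter_add_card_sdiff
      (G.neighborFinset x ∩ G.neighborFinset x') s
    rw [hCN, hin] at hsum
    have hx'e : x' ∈ s.erase x := Finset.mem_erase.mpr ⟨Ne.symm hne, hx'⟩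
    rw [Finset.card_erase_of_mem hx'e, Finset.card_erase_of_mem hx] at hsum
    have h2c : 2 ≤ c := by
      have : ({x, x'} : Finset V) ⊆ s := by
        intro z hz
        rcases Finset.mem_insert.mp hz with h | h
        · exact h ▸ hx
        · exact (Finset.mem_singleton.mp h) ▸ hx'
      have := Finset.card_le_card this
      rwa [Finset.card_insert_of_notMem (by simp [hne]), Finset.card_singleton] at this
    rw [hfe]
    have : ((c - 1 - 1 : ℕ) : ℤ)
        + (((G.neighborFinset x ∩ G.neighborFinset x') \ s).card : ℤ) = (l : ℤ) := by
      exact_mod_cast congrArg (Nat.cast : ℕ → ℤ) hsum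
    rw [Nat.cast_sub (by omega), Nat.cast_sub (by omega)] at this
    push_cast at this ⊢
    linarith
  -- first moment
  have S1 : (∑ y ∈ sᶜ, ((s.filter (G.Adj y)).card : ℤ)) = (c : ℤ) * ((k : ℤ) - c + 1) := by
    have e1 : ∀ y : V, ((s.filter (G.Adj y)).card : ℤ)
        = ∑ x ∈ s, (if G.Adj y x then (1 : ℤ) else 0) := fun y =>
      (Finset.sum_boole _ _).symm
    calc (∑ y ∈ sᶜ, ((s.filter (G.Adj y)).card : ℤ))
        = ∑ y ∈ sᶜ, ∑ x ∈ s, (if G.Adj y x then (1 : ℤ) else 0) := by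
          exact Finset.sum_congr rfl fun y _ => e1 y
      _ = ∑ x ∈ s, ∑ y ∈ sᶜ, (if G.Adj y x then (1 : ℤ) else 0) := Finset.sum_comm
      _ = ∑ x ∈ s, ((sᶜ.filter (fun y => G.Adj y x)).card : ℤ) := by
          exact Finset.sum_congr rfl fun x _ => Finset.sum_boole _ _
      _ = ∑ x ∈ s, ((k : ℤ) - c + 1) := Finset.sum_congr rfl key1
      _ = (c : ℤ) * ((k : ℤ) - c + 1) := by rw [Finset.sum_const, nsmul_eq_mul]
  -- second moment
  have S2 : (∑ y ∈ sᶜ, ((s.filter (G.Adj y)).card : ℤ) ^ 2)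
      = (c : ℤ) * ((k : ℤ) - c + 1)
        + (c : ℤ) * ((c : ℤ) - 1) * ((l : ℤ) - c + 2) := by
    have e2 : ∀ y : V, ((s.filter (G.Adj y)).card : ℤ) ^ 2
        = ∑ x ∈ s, ∑ x' ∈ s,
            (if G.Adj y x ∧ G.Adj y x' then (1 : ℤ) else 0) := by
      intro y
      rw [sq, ← Finset.sum_boole (p := G.Adj y) (s := s), Finset.sum_mul_sum]
      exact Finset.sum_congr rfl fun x _ => Finset.sum_congr rfl fun x' _ => boole_mul_boole
    calc (∑ y ∈ sᶜ, ((s.filter (G.Adj y)).card : ℤ) ^ 2)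
        = ∑ y ∈ sᶜ, ∑ x ∈ s, ∑ x' ∈ s,
            (if G.Adj y x ∧ G.Adj y x' then (1 : ℤ) else 0) := by
          exact Finset.sum_congr rfl fun y _ => e2 y
      _ = ∑ x ∈ s, ∑ y ∈ sᶜ, ∑ x' ∈ s,
            (if G.Adj y x ∧ G.Adj y x' then (1 : ℤ) else 0) := Finset.sum_comm
      _ = ∑ x ∈ s, ∑ x' ∈ s, ∑ y ∈ sᶜ,
            (if G.Adj y x ∧ G.Adj y x' then (1 : ℤ) else 0) := by
          exact Finset.sum_congr rfl fun x _ => Finset.sum_comm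
      _ = ∑ x ∈ s, ∑ x' ∈ s,
            ((sᶜ.filter (fun y => G.Adj y x ∧ G.Adj y x')).card : ℤ) := by
          exact Finset.sum_congr rfl fun x _ => Finset.sum_congr rfl fun x' _ =>
            Finset.sum_boole _ _
      _ = ∑ x ∈ s, (((k : ℤ) - c + 1) + ((c : ℤ) - 1) * ((l : ℤ) - c + 2)) := by
          refine Finset.sum_congr rfl fun x hx => ?_
          rw [← Finset.add_sum_erase _ _ hx]
          congr 1
          · have : sᶜ.filter (fun y => G.Adj y x ∧ G.Adj y x)
                = sᶜ.filter (fun y => G.Adj y x) := by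
              apply Finset.filter_congr
              intro y _
              simp
            rw [this]
            exact key1 x hx
          · have : ∀ x' ∈ s.erase x,
                ((sᶜ.filter (fun y => G.Adj y x ∧ G.Adj y x')).card : ℤ)
                  = (l : ℤ) - c + 2 := by
              intro x' hx'
              obtain ⟨hne, hx's⟩ := Finset.mem_erase.mp hx'
              exact key2 x hx x' hx's (Ne.symm hne)
            rw [Finset.sum_congr rfl this, Finset.sum_const, nsmul_eq_mul,
              Finset.card_erase_of_mem hx, Nat.cast_sub (hc1 x hx)]
            push_cast
            ring
      _ = (c : ℤ) * ((k : ℤ) - c + 1)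
            + (c : ℤ) * ((c : ℤ) - 1) * ((l : ℤ) - c + 2) := by
          rw [Finset.sum_const, nsmul_eq_mul]
          ring
  -- cardinality of the complement
  have hcv : c ≤ v := by
    rw [← h.card]
    exact Finset.card_le_univ s
  have hcompl : ((sᶜ.card : ℕ) : ℤ) = (v : ℤ) - c := by
    rw [Finset.card_compl, h.card, Nat.cast_sub hcv]
  -- the sum of products of consecutive integers is nonnegative
  have main : (0 : ℤ) ≤ ∑ y ∈ sᶜ,
      (((s.filter (G.Adj y)).card : ℤ) - b) * (((s.filter (G.Adj y)).card : ℤ) - b - 1) :=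
    Finset.sum_nonneg fun y _ => consec_nonneg _
  have expand : (∑ y ∈ sᶜ,
      (((s.filter (G.Adj y)).card : ℤ) - b) * (((s.filter (G.Adj y)).card : ℤ) - b - 1))
      = (∑ y ∈ sᶜ, ((s.filter (G.Adj y)).card : ℤ) ^ 2)
        - (2 * b + 1) * (∑ y ∈ sᶜ, ((s.filter (G.Adj y)).card : ℤ))
        + (sᶜ.card : ℤ) * (b * (b + 1)) := by
    rw [Finset.mul_sum, ← Finset.sum_sub_distrib]
    rw [show ((sᶜ.card : ℕ) : ℤ) * (b * (b + 1)) = ∑ _y ∈ sᶜ, b * (b + 1) by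
      rw [Finset.sum_const, nsmul_eq_mul]]
    rw [← Finset.sum_add_distrib]
    exact Finset.sum_congr rfl fun y _ => by ring
  rw [expand, S1, S2, hcompl] at main
  linarith

/-- Theorem `thm:beatDelsarteConf` for type-I strongly regular graphs. -/
theorem stmt_0 {V : Type*} [Fintype V] [DecidableEq V] (G : SimpleGraph V) [DecidableRel G.Adj]
    (m : ℕ) (hm : 1 ≤ m)
    (hsrg : G.IsSRGWith (4 * m + 1) (2 * m) (m - 1) m)
    (hnoncomplete : G ≠ ⊤) (hedge : G ≠ ⊥)
    (hfrac1 : 0 < Int.fract (Real.sqrt (4 * m + 1) / 2))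
    (hfrac2 : Int.fract (Real.sqrt (4 * m + 1) / 2) <
      1 / 4 + (Real.sqrt (4 * m + 1) - Real.sqrt ((4 * m + 1 : ℝ) + 5 / 4)) / 2) :
    (G.cliqueNum : ℤ) ≤ ⌊Real.sqrt (4 * m + 1) - 1⌋ := by
  set x : ℝ := Real.sqrt (4 * m + 1) with hxdef
  set N : ℤ := ⌊x / 2⌋ with hNdef
  have hv0 : (0 : ℝ) ≤ 4 * (m : ℝ) + 1 := by positivity
  have hx0 : 0 ≤ x := Real.sqrt_nonneg _
  have hN0 : 0 ≤ N := Int.floor_nonneg.mpr (by positivity)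
  -- 2N < x
  have hNlt : (N : ℝ) < x / 2 := by
    rcases lt_or_eq_of_le (Int.floor_le (x / 2)) with h | h
    · exact h
    · exact absurd h.symm (Int.fract_pos.mp hfrac1)
  have h2N : (2 * N : ℝ) < x := by linarith
  have hxsq : x ^ 2 = 4 * (m : ℝ) + 1 := Real.sq_sqrt hv0
  -- lower bound : 4N² < 4m+1
  have hlow : 4 * N ^ 2 < 4 * (m : ℤ) + 1 := by
    have h1 : ((2 * N : ℤ) : ℝ) * ((2 * N : ℤ) : ℝ) < x * x :=
      mul_self_lt_mul_self (by exact_mod_cast mul_nonneg (by norm_num) hN0) (by push_cast; exact h2N)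
    have h2 : ((4 * N ^ 2 : ℤ) : ℝ) < 4 * (m : ℝ) + 1 := by
      push_cast at h1 ⊢
      nlinarith
    exact_mod_cast h2
  -- upper bound : 4m+1 ≤ 4N² + 2N - 2
  have hfr : Int.fract (x / 2) = x / 2 - N := (Int.self_sub_floor (x / 2)).symm
  rw [hfr] at hfrac2
  have hs2 : Real.sqrt ((4 * (m : ℝ) + 1) + 5 / 4) < 2 * N + 1 / 2 := by linarith
  have hup : 4 * (m : ℤ) + 1 ≤ 4 * N ^ 2 + 2 * N - 2 := by
    have hp : (0 : ℝ) < 2 * (N : ℝ) + 1 / 2 := by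
      have : (0 : ℝ) ≤ (N : ℝ) := by exact_mod_cast hN0
      linarith
    have h1 : (4 * (m : ℝ) + 1) + 5 / 4 < (2 * (N : ℝ) + 1 / 2) ^ 2 :=
      (Real.sqrt_lt' hp).mp hs2
    have h2 : ((4 * (m : ℤ) + 1 : ℤ) : ℝ) < ((4 * N ^ 2 + 2 * N - 1 : ℤ) : ℝ) := by
      push_cast
      nlinarith
    have h3 : 4 * (m : ℤ) + 1 < 4 * N ^ 2 + 2 * N - 1 := by exact_mod_cast h2
    linarith
  -- N ≥ 2
  have hN2 : 2 ≤ N := by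
    by_contra hcon
    push_neg at hcon
    have hm' : (1 : ℤ) ≤ (m : ℤ) := by exact_mod_cast hm
    nlinarith [mul_nonneg hN0 (by linarith : (0 : ℤ) ≤ 2 - N)]
  -- x < 2N + 1
  have hxub : x < 2 * (N : ℝ) + 1 := by
    have hp : (0 : ℝ) < 2 * (N : ℝ) + 1 := by
      have : (0 : ℝ) ≤ (N : ℝ) := by exact_mod_cast hN0
      linarith
    refine (Real.sqrt_lt' hp).mpr ?_
    have : ((4 * (m : ℤ) + 1 : ℤ) : ℝ) ≤ ((4 * N ^ 2 + 2 * N - 2 : ℤ) : ℝ) := by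
      exact_mod_cast hup
    push_cast at this ⊢
    nlinarith [hN0]
  -- the floor is 2N - 1
  have hfloor : ⌊x - 1⌋ = 2 * N - 1 := by
    rw [Int.floor_eq_iff]
    constructor
    · push_cast
      linarith
    · push_cast
      linarith
  rw [hfloor]
  -- now show the clique number is at most 2N - 1
  by_contra hcon
  push_neg at hcon
  have hω : 2 * N ≤ (G.cliqueNum : ℤ) := by omega
  set n : ℕ := N.toNat with hndef
  have hNn : (n : ℤ) = N := Int.toNat_of_nonneg hN0
  obtain ⟨S, hS⟩ := G.exists_isNClique_cliqueNum
  have hcard : 2 * n ≤ S.card := by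
    rw [hS.card_eq]
    exact_mod_cast (by rw [Nat.cast_mul, Nat.cast_ofNat, hNn]; exact hω :
      ((2 * n : ℕ) : ℤ) ≤ (G.cliqueNum : ℤ))
  obtain ⟨t, hts, htcard⟩ := Finset.exists_subset_card_eq hcard
  have htcl : G.IsClique (t : Finset V) := hS.isClique.subset hts
  have hso := soicher_ineq G hsrg htcl (N - 1)
  rw [htcard] at hso
  have hml : ((m - 1 : ℕ) : ℤ) = (m : ℤ) - 1 := by
    rw [Nat.cast_sub hm]; norm_num
  push_cast [hml] at hso
  rw [hNn] at hso
  -- hso : 0 ≤ C where C = N * (2m - 2N² - N + 1)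
  have hC : (0 : ℤ) ≤ N * (2 * (m : ℤ) - 2 * N ^ 2 - N + 1) := by nlinarith [hso]
  -- from hup and parity: 2m ≤ 2N² + N - 2
  have h4 : 4 * (m : ℤ) ≤ 4 * N ^ 2 + 2 * N - 3 := by linarith
  have h2m : 2 * (m : ℤ) ≤ 2 * N ^ 2 + N - 2 := by
    have := h4
    generalize hK : N ^ 2 = K at this ⊢
    omega
  have hneg : N * (2 * (m : ℤ) - 2 * N ^ 2 - N + 1) < 0 :=
    mul_neg_of_pos_of_neg (by linarith) (by linarith)
  linarith
end

section
/- Let Γ be a strongly regular graph with parameters (v, k, λ, μ) whose complement is connected, and suppose Γ is type II: there exist integers r and s with r ≥ s, s < 0, r + s = λ − μ and r·s = μ − k (so k, r, s are the eigenvalues of Γ, with k > r). Suppose that 0 < frac(−k/s) < 1 − (r² + r)/(v − 2k + λ), where frac(a) = a − ⌊a⌋ and the quantities are computed in ℝ. Then the clique number of Γ satisfies ω(Γ) ≤ ⌊−k/s⌋. -/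
/-!
Let `T` be a clique of size `c` and, for a vertex `x`, let `d x` be the number of neighbours of `x`
in `T`. Double counting gives `∑ d x = c k` and `∑ (d x)² = c k + c (c - 1) λ`, and `d x = c - 1`
on `T`. Since `(d x - e) (d x - e - 1) ≥ 0` for every integer `e`, summing over `x ∉ T` gives
Soicher's clique adjacency bound `C(e, c) ≥ 0`.

Write `s = -n` and `k = n q + ρ` with `0 < ρ < n` (this is `frac (-k/s) > 0`), and put
`g = n - ρ`, `d = q - r`. The type II relations give `μ = n (d + 1) - g` and
`(v - 2k + λ) μ = r (r + 1) n (n - 1)`, so the second hypothesis on the fractional part says exactly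
`g > d + 1`. Then `μ C(d, q + 1) = r (r + 1) (g - d - 1) (g - n) < 0`, so there is no clique of
size `q + 1 = ⌊-k/s⌋ + 1`.
-/

open Finset

-- Soicher's clique adjacency polynomial `C(x, y)`, where `y` is the size of the clique.
def cliqueAdjacencyPoly (v k l x y : ℤ) : ℤ :=
  x * (x + 1) * (v - y) - 2 * x * y * (k - y + 1) + y * (y - 1) * (l - y + 2)

namespace SimpleGraph

theorem exists_adj_not_adj_not_adj_of_connected_compl {V : Type*} {G : SimpleGraph V}
    (hc : Gᶜ.Connected) {a b : V} (hab : G.Adj a b) :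
    ∃ x y z, G.Adj x y ∧ ¬G.Adj x z ∧ ¬G.Adj y z := by
  by_contra! h
  -- otherwise `G.neighborSet a` is closed under adjacency in `Gᶜ`, and it contains `b`
  have hclosed (w : V) (hw : Relation.ReflTransGen Gᶜ.Adj b w) : G.Adj a w := by
    induction hw with
    | refl => exact hab
    | tail _ hyz ih => exact h _ _ _ ih.symm ((compl_adj G _ _).mp hyz).2
  exact G.irrefl (hclosed a ((reachable_iff_reflTransGen b a).mp (hc b a)))

theorem IsClique.filter_adj_eq_erase {V : Type*} [DecidableEq V] {G : SimpleGraph V}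
    [DecidableRel G.Adj] {t : Finset V} (ht : G.IsClique t) {x : V} (hx : x ∈ t) :
    {y ∈ t | G.Adj x y} = t.erase x := by
  ext y
  simp only [mem_filter, mem_erase]
  exact ⟨fun ⟨hy, hxy⟩ => ⟨hxy.ne', hy⟩, fun ⟨hyx, hy⟩ => ⟨hy, ht hx hy hyx.symm⟩⟩

variable {V : Type*} [Fintype V] {G : SimpleGraph V} [DecidableRel G.Adj]

theorem sum_card_filter_adj (t : Finset V) :
    ∑ x, #{y ∈ t | G.Adj x y} = ∑ y ∈ t, G.degree y := by
  refine (sum_card_bipartiteAbove_eq_sum_card_bipartiteBelow G.Adj).trans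
    (sum_congr rfl fun y _ => ?_)
  simp_rw [bipartiteBelow, ← card_neighborFinset_eq_degree, neighborFinset_eq_filter, adj_comm]

theorem sum_card_filter_adj_sq (t : Finset V) :
    ∑ x, #{y ∈ t | G.Adj x y} ^ 2 = ∑ p ∈ t ×ˢ t, #{x | G.Adj x p.1 ∧ G.Adj x p.2} := by
  simp_rw [sq, ← card_product, ← filter_product]
  exact sum_card_bipartiteAbove_eq_sum_card_bipartiteBelow
    (fun x (p : V × V) => G.Adj x p.1 ∧ G.Adj x p.2)

namespace IsSRGWith

variable {v k l μ : ℕ} (h : G.IsSRGWith v k l μ)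
include h

theorem lt_of_adj {a b : V} (hab : G.Adj a b) : l < k :=
  h.of_adj a b hab ▸ h.regular a ▸ hab.card_commonNeighbors_lt_degree

theorem param_eq_of_adj {a b : V} (hab : G.Adj a b) :
    (k : ℤ) * (k - l - 1) = (v - k - 1) * μ := by
  have hlk := h.lt_of_adj hab
  have hkv : k < v := h.card ▸ h.regular a ▸ G.degree_lt_card_verts a
  have hkl : ((k - l - 1 : ℕ) : ℤ) = k - l - 1 := by omega
  have hvk : ((v - k - 1 : ℕ) : ℤ) = v - k - 1 := by omega
  rw [← hkl, ← hvk]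
  exact_mod_cast h.param_eq G (by omega)

theorem card_sub_two_mul_add_pos [DecidableEq V] (hc : Gᶜ.Connected) {a b : V} (hab : G.Adj a b) :
    (0 : ℤ) < v - 2 * k + l := by
  obtain ⟨x, y, z, hxy, hxz, hyz⟩ := exists_adj_not_adj_not_adj_of_connected_compl hc hab
  have hz : z ∉ G.neighborFinset x ∪ G.neighborFinset y := by simp [hxz, hyz]
  have hlt : #(G.neighborFinset x ∪ G.neighborFinset y) < #(univ : Finset V) :=
    card_lt_card (ssubset_univ_iff.mpr fun hu => hz (hu ▸ mem_univ z))
  rw [h.card_neighborFinset_union_of_adj hxy, card_univ, h.card] at hlt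
  have := h.lt_of_adj hab
  omega

theorem card_filter_adj_adj {y y' : V} (hadj : G.Adj y y') :
    #{x | G.Adj x y ∧ G.Adj x y'} = l := by
  rw [← h.of_adj y y' hadj, ← Set.toFinset_card]
  congr 1
  ext x
  simp [mem_commonNeighbors, adj_comm]

theorem sum_card_filter_adj (t : Finset V) : ∑ x, #{y ∈ t | G.Adj x y} = #t * k := by
  rw [G.sum_card_filter_adj, sum_const_nat fun y _ => h.regular y]

theorem sum_card_filter_adj_sq_of_isClique [DecidableEq V] {t : Finset V} (ht : G.IsClique t) :
    ∑ x, (#{y ∈ t | G.Adj x y} : ℤ) ^ 2 = #t * k + #t * (#t - 1) * l := by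
  have hpair (p) (hp : p ∈ t ×ˢ t) :
      (#{x | G.Adj x p.1 ∧ G.Adj x p.2} : ℤ) = l + if p.1 = p.2 then (k - l : ℤ) else 0 := by
    obtain ⟨y, y'⟩ := p
    rw [mem_product] at hp
    split_ifs with hyy'
    · simp only at hyy'
      subst hyy'
      simp [← h.regular y, ← card_neighborFinset_eq_degree, neighborFinset_eq_filter, adj_comm]
    · simp [h.card_filter_adj_adj (ht hp.1 hp.2 hyy')]
  have hsq := congrArg (Nat.cast (R := ℤ)) (G.sum_card_filter_adj_sq t)
  push_cast at hsq
  rw [hsq, sum_congr rfl hpair, sum_product]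
  simp only [sum_add_distrib, sum_ite_eq, sum_ite_mem, inter_self, sum_const, nsmul_eq_mul]
  ring

theorem cliqueAdjacencyPoly_nonneg [DecidableEq V] {t : Finset V} (ht : G.IsClique t) (e : ℤ) :
    0 ≤ cliqueAdjacencyPoly v k l e #t := by
  set d : V → ℤ := fun x => #{y ∈ t | G.Adj x y}
  have hclique (x) (hx : x ∈ t) : d x = #t - 1 := by
    simp only [d, ht.filter_adj_eq_erase hx, card_erase_of_mem hx]
    exact Nat.cast_pred (card_pos.mpr ⟨x, hx⟩)
  have hle := sum_le_univ_sum_of_nonneg (s := t) fun x =>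
    show 0 ≤ (d x - e) * (d x - e - 1) by rcases le_or_gt (d x) e with hx | hx <;> nlinarith
  rw [sum_congr rfl fun x hx => by rw [hclique x hx], sum_const, nsmul_eq_mul] at hle
  have hexp : ∑ x, (d x - e) * (d x - e - 1)
      = ∑ x, d x ^ 2 - (2 * e + 1) * ∑ x, d x + v * (e * (e + 1)) := by
    rw [mul_sum, ← sum_sub_distrib, ← h.card, ← card_univ, ← nsmul_eq_mul, ← sum_const,
      ← sum_add_distrib]
    exact sum_congr rfl fun x _ => by ring
  have hsum : ∑ x, d x = #t * k := by simp only [d]; exact_mod_cast h.sum_card_filter_adj t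
  rw [hexp, hsum, h.sum_card_filter_adj_sq_of_isClique ht] at hle
  unfold cliqueAdjacencyPoly
  linear_combination hle

theorem cliqueNum_lt_of_cliqueAdjacencyPoly_neg [DecidableEq V] {c : ℕ} {e : ℤ}
    (hneg : cliqueAdjacencyPoly v k l e c < 0) : G.cliqueNum < c := by
  by_contra! hc
  obtain ⟨s, hs⟩ := G.exists_isNClique_cliqueNum
  obtain ⟨t, hts, htc⟩ := exists_subset_card_eq (hs.card_eq ▸ hc)
  have := h.cliqueAdjacencyPoly_nonneg (hs.isClique.subset (by exact_mod_cast hts)) e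
  rw [htc] at this
  linarith

end IsSRGWith

end SimpleGraph

theorem mul_cliqueAdjacencyPoly_eq {v k l μ r n d g : ℤ} (hkμ : k = μ + r * n)
    (hlμ : l = μ + r - n) (hparam : k * (k - l - 1) = (v - k - 1) * μ)
    (hμ : μ = n * (d + 1) - g) :
    μ * cliqueAdjacencyPoly v k l d (r + d + 1) = r * (r + 1) * (g - d - 1) * (g - n) := by
  unfold cliqueAdjacencyPoly
  subst hkμ hlμ hμ
  linear_combination (-(d * (d + 1))) * hparam

theorem cliqueAdjacencyPoly_neg {v k l μ r n q ρ : ℤ} (hk : k = n * q + ρ) (hq : 0 ≤ q)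
    (hρ : 0 < ρ) (hρn : ρ < n) (hkμ : k = μ + r * n) (hlμ : l = μ + r - n)
    (hparam : k * (k - l - 1) = (v - k - 1) * μ) (hD : 0 < v - 2 * k + l)
    (hfrac : n * (r ^ 2 + r) < (v - 2 * k + l) * (n - ρ)) :
    cliqueAdjacencyPoly v k l (q - r) (q + 1) < 0 := by
  have hDμ : (v - 2 * k + l) * μ = r * (r + 1) * (n * (n - 1)) := by
    subst hkμ hlμ; linear_combination -hparam
  have hn : 2 ≤ n := by linarith
  have hr : 0 < r * (r + 1) := by
    by_contra! hr
    have hr0 : r * (r + 1) = 0 :=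
      le_antisymm hr (by rcases le_or_gt r (-1) with h | h <;> nlinarith)
    have hμ0 : μ = 0 := by
      have : (v - 2 * k + l) * μ = 0 := by rw [hDμ, hr0, zero_mul]
      exact (mul_eq_zero.mp this).resolve_left hD.ne'
    rcases mul_eq_zero.mp hr0 with h | h <;> nlinarith
  have hμ : 0 < μ :=
    pos_of_mul_pos_right (hDμ ▸ mul_pos hr (mul_pos (by omega) (by omega))) hD.le
  have hgd : q - r + 1 < n - ρ := by
    have h1 : n * (r * (r + 1)) * μ < n * (r * (r + 1)) * ((n - 1) * (n - ρ)) :=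
      calc n * (r * (r + 1)) * μ = μ * (n * (r ^ 2 + r)) := by ring
        _ < μ * ((v - 2 * k + l) * (n - ρ)) := mul_lt_mul_of_pos_left hfrac hμ
        _ = n * (r * (r + 1)) * ((n - 1) * (n - ρ)) := by linear_combination (n - ρ) * hDμ
    have h2 : μ < (n - 1) * (n - ρ) := lt_of_mul_lt_mul_left h1 (by positivity)
    have h3 : n * (q - r + 1) < n * (n - ρ) := by linarith
    exact lt_of_mul_lt_mul_left h3 (by positivity)
  have key := mul_cliqueAdjacencyPoly_eq (d := q - r) (g := n - ρ) hkμ hlμ hparam (by linarith)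
  rw [show r + (q - r) + 1 = q + 1 by ring] at key
  have : r * (r + 1) * (n - ρ - (q - r) - 1) * (n - ρ - n) < 0 :=
    mul_neg_of_pos_of_neg (mul_pos hr (by linarith)) (by linarith)
  exact neg_of_mul_neg_right (key ▸ this) hμ.le

theorem mul_lt_mul_sub_of_div_lt_one_sub_div {K : Type*} [Field K] [LinearOrder K]
    [IsOrderedRing K] {a b c d : K} (hb : 0 < b) (hd : 0 < d) (h : a / b < 1 - c / d) :
    b * c < d * (b - a) := by
  rw [div_lt_iff₀ hb, sub_mul, one_mul, lt_sub_comm, div_mul_eq_mul_div, div_lt_iff₀ hd] at h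
  linarith

theorem stmt_1_general {V : Type*} [Fintype V] [DecidableEq V] (G : SimpleGraph V) [DecidableRel G.Adj]
    (v k l μ : ℕ) (hsrg : G.IsSRGWith v k l μ)
    (hcoconn : Gᶜ.Connected)
    (r s : ℤ) (hs : s < 0)
    (hsum : r + s = (l : ℤ) - μ) (hprod : r * s = (μ : ℤ) - k)
    (hfrac1 : 0 < Int.fract (-(k : ℝ) / s))
    (hfrac2 : Int.fract (-(k : ℝ) / s) <
      1 - ((r : ℝ) ^ 2 + r) / ((v : ℝ) - 2 * k + l)) :
    (G.cliqueNum : ℤ) ≤ ⌊-(k : ℝ) / s⌋ := by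
  obtain ⟨n, rfl⟩ := Int.exists_eq_neg_ofNat hs.le
  have hn : 0 < n := by omega
  have hkn : -(k : ℝ) / ((-(n : ℤ) : ℤ) : ℝ) = k / n := by push_cast; exact neg_div_neg_eq _ _
  rw [hkn, Int.fract_div_natCast_eq_div_natCast_mod] at hfrac1 hfrac2
  rw [hkn, Int.floor_div_natCast, Int.floor_natCast, ← Int.natCast_div]
  have hρ : 0 < k % n := by exact_mod_cast (div_pos_iff_of_pos_right (by positivity)).mp hfrac1
  obtain ⟨a⟩ := hcoconn.nonempty
  obtain ⟨b, hab⟩ := (G.degree_pos_iff_exists_adj a).mp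
    (hsrg.regular a ▸ Nat.pos_of_ne_zero fun hk => by simp [hk] at hρ)
  have hD := hsrg.card_sub_two_mul_add_pos hcoconn hab
  have hfrac : (n : ℤ) * (r ^ 2 + r) < (v - 2 * k + l) * (n - (k % n : ℕ)) := by
    exact_mod_cast mul_lt_mul_sub_of_div_lt_one_sub_div (by positivity) (by exact_mod_cast hD)
      hfrac2
  have hdivmod : (k : ℤ) = n * (k / n : ℕ) + (k % n : ℕ) := by
    exact_mod_cast (Nat.div_add_mod k n).symm
  have hneg := cliqueAdjacencyPoly_neg hdivmod (by positivity) (by exact_mod_cast hρ)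
    (by exact_mod_cast Nat.mod_lt k hn) (by linarith) (by linarith) (hsrg.param_eq_of_adj hab) hD
    hfrac
  have := hsrg.cliqueNum_lt_of_cliqueAdjacencyPoly_neg (c := k / n + 1) (by exact_mod_cast hneg)
  omega

/-- Theorem `thm:beatDelsarteNonConf` for co-connected type-II
strongly regular graphs. -/
theorem stmt_1 {V : Type*} [Fintype V] [DecidableEq V] (G : SimpleGraph V) [DecidableRel G.Adj]
    (v k l μ : ℕ) (hsrg : G.IsSRGWith v k l μ)
    (hnoncomplete : G ≠ ⊤) (hedge : G ≠ ⊥)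
    (hcoconn : Gᶜ.Connected)
    (r s : ℤ) (hrs : s ≤ r) (hs : s < 0)
    (hsum : r + s = (l : ℤ) - μ) (hprod : r * s = (μ : ℤ) - k)
    (hfrac1 : 0 < Int.fract (-(k : ℝ) / s))
    (hfrac2 : Int.fract (-(k : ℝ) / s) <
      1 - ((r : ℝ) ^ 2 + r) / ((v : ℝ) - 2 * k + l)) :
    (G.cliqueNum : ℤ) ≤ ⌊-(k : ℝ) / s⌋ :=
  stmt_1_general G v k l μ hsrg hcoconn r s hs hsum hprod hfrac1 hfrac2
end

section
/- Let Γ be an edge-regular graph with parameters (v, k, λ), and let C(x, y) = x(x+1)(v−y) − 2xy(k−y+1) + y(y−1)(λ−y+2) be its clique adjacency polynomial. Suppose that Γ has a clique of size c, where c ≥ 2 is an integer. Then C(b, c) ≥ 0 for every integer b. -/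
/-- The clique adjacency polynomial over the integers. -/
def cliqueAdjPolyInt (v k lam : ℤ) (x y : ℤ) : ℤ :=
  x * (x + 1) * (v - y) - 2 * x * y * (k - y + 1) + y * (y - 1) * (lam - y + 2)

/-- Theorem `thm:CliqueAdjPol`, the clique adjacency polynomial is
nonnegative at `(b, c)` for every integer `b` when the edge-regular graph has a
clique of size `c ≥ 2`. -/
theorem stmt_4 {V : Type*} [Fintype V] [DecidableEq V] (G : SimpleGraph V) [DecidableRel G.Adj]
    (v k lam : ℕ)
    (hcard : Fintype.card V = v)
    (hreg : G.IsRegularOfDegree k)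
    (hedge : G ≠ ⊥)
    (hadj : ∀ a b : V, G.Adj a b → Fintype.card (G.commonNeighbors a b) = lam)
    (c : ℕ) (hc : 2 ≤ c) (t : Finset V) (hclique : G.IsNClique c t) :
    ∀ b : ℤ, 0 ≤ cliqueAdjPolyInt v k lam b c := by
  intro b
  classical
  have hcardt : t.card = c := hclique.2
  have hclq := hclique.1
  set ind : V → V → ℤ := fun w s => if G.Adj w s then 1 else 0 with hind
  set n : V → ℤ := fun w => ∑ s ∈ t, ind w s with hn
  -- (A) for s ∈ t, the number of neighbours of s outside t is k - (c-1)
  have hA : ∀ s ∈ t, (∑ w ∈ tᶜ, ind w s) = (k : ℤ) - ((c : ℤ) - 1) := by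
    intro s hs
    have hsplit : (∑ w ∈ tᶜ, ind w s) + (∑ w ∈ t, ind w s)
        = ∑ w : V, ind w s := Finset.sum_compl_add_sum t _
    have huniv : (∑ w : V, ind w s) = (k : ℤ) := by
      have h1 : (∑ w : V, ind w s)
          = ((Finset.univ.filter (fun w => G.Adj w s)).card : ℤ) := by
        simp [hind, Finset.sum_boole]
      have h2 : Finset.univ.filter (fun w => G.Adj w s) = G.neighborFinset s := by
        ext w
        simp [SimpleGraph.mem_neighborFinset, G.adj_comm]
      rw [h1, h2]
      have := hreg s
      rw [SimpleGraph.degree] at this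
      exact_mod_cast this
    have hfil : t.filter (fun w => G.Adj w s) = t.erase s := by
      ext w
      simp only [Finset.mem_filter, Finset.mem_erase]
      constructor
      · rintro ⟨hw, hadj'⟩
        exact ⟨G.ne_of_adj hadj', hw⟩
      · rintro ⟨hne, hw⟩
        exact ⟨hw, hclq hw hs hne⟩
    have ht : (∑ w ∈ t, ind w s) = ((c : ℤ) - 1) := by
      have h1 : (∑ w ∈ t, ind w s)
          = ((t.filter (fun w => G.Adj w s)).card : ℤ) := by
        simp [hind, Finset.sum_boole]
      rw [h1, hfil, Finset.card_erase_of_mem hs, hcardt]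
      have : (1:ℕ) ≤ c := by omega
      push_cast [this]
      ring
    have := hsplit
    rw [huniv, ht] at *
    linarith [hsplit]
  -- (B) for distinct s, s' ∈ t, common neighbours outside t number lam - (c-2)
  have hB : ∀ s ∈ t, ∀ s' ∈ t, s ≠ s' →
      (∑ w ∈ tᶜ, ind w s * ind w s') = (lam : ℤ) - ((c : ℤ) - 2) := by
    intro s hs s' hs' hne
    have hprod : ∀ w, ind w s * ind w s'
        = (if G.Adj w s ∧ G.Adj w s' then (1:ℤ) else 0) := by
      intro w
      by_cases h1 : G.Adj w s <;> by_cases h2 : G.Adj w s' <;>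
        simp [hind, h1, h2]
    have hadjss' : G.Adj s s' := hclq hs hs' hne
    have hsplit : (∑ w ∈ tᶜ, if G.Adj w s ∧ G.Adj w s' then (1:ℤ) else 0)
        + (∑ w ∈ t, if G.Adj w s ∧ G.Adj w s' then (1:ℤ) else 0)
        = ∑ w : V, if G.Adj w s ∧ G.Adj w s' then (1:ℤ) else 0 :=
      Finset.sum_compl_add_sum t _
    have huniv : (∑ w : V, if G.Adj w s ∧ G.Adj w s' then (1:ℤ) else 0)
        = (lam : ℤ) := by
      have h1 : (∑ w : V, if G.Adj w s ∧ G.Adj w s' then (1:ℤ) else 0)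
          = ((Finset.univ.filter (fun w => G.Adj w s ∧ G.Adj w s')).card : ℤ) := by
        simp [Finset.sum_boole]
      rw [h1]
      have h2 : (Finset.univ.filter (fun w => G.Adj w s ∧ G.Adj w s')).card
          = Fintype.card (G.commonNeighbors s s') := by
        rw [Fintype.card_subtype]  -- may need adjusting
        congr 1
        ext w
        simp [SimpleGraph.mem_commonNeighbors, G.adj_comm]
      rw [h2, hadj s s' hadjss']
    have hfil : t.filter (fun w => G.Adj w s ∧ G.Adj w s') = (t.erase s).erase s' := by
      ext w
      simp only [Finset.mem_filter, Finset.mem_erase]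
      constructor
      · rintro ⟨hw, h1, h2⟩
        exact ⟨G.ne_of_adj h2, G.ne_of_adj h1, hw⟩
      · rintro ⟨hne2, hne1, hw⟩
        exact ⟨hw, hclq hw hs hne1, hclq hw hs' hne2⟩
    have ht : (∑ w ∈ t, if G.Adj w s ∧ G.Adj w s' then (1:ℤ) else 0)
        = ((c : ℤ) - 2) := by
      have h1 : (∑ w ∈ t, if G.Adj w s ∧ G.Adj w s' then (1:ℤ) else 0)
          = ((t.filter (fun w => G.Adj w s ∧ G.Adj w s')).card : ℤ) := by
        simp [Finset.sum_boole]
      have hs'e : s' ∈ t.erase s := Finset.mem_erase.mpr ⟨hne.symm, hs'⟩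
      rw [h1, hfil, Finset.card_erase_of_mem hs'e, Finset.card_erase_of_mem hs, hcardt]
      omega
    calc (∑ w ∈ tᶜ, ind w s * ind w s')
        = ∑ w ∈ tᶜ, if G.Adj w s ∧ G.Adj w s' then (1:ℤ) else 0 := by
          exact Finset.sum_congr rfl fun w _ => hprod w
      _ = (lam : ℤ) - ((c : ℤ) - 2) := by
          rw [huniv, ht] at hsplit
          linarith
  -- Sums
  have hS1 : (∑ _w ∈ tᶜ, (1:ℤ)) = (v : ℤ) - c := by
    have h0 : tᶜ.card = Fintype.card V - t.card := Finset.card_compl t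
    have hle : c ≤ v := by rw [← hcard, ← hcardt]; exact Finset.card_le_univ t
    simp only [Finset.sum_const, nsmul_eq_mul, mul_one]
    rw [h0, hcard, hcardt, Nat.cast_sub hle]
  have hS2 : (∑ w ∈ tᶜ, n w) = (c : ℤ) * ((k : ℤ) - c + 1) := by
    rw [hn]
    rw [Finset.sum_comm]
    rw [Finset.sum_congr rfl hA]
    rw [Finset.sum_const, hcardt]
    push_cast
    ring
  have hS3 : (∑ w ∈ tᶜ, n w * (n w - 1)) = (c : ℤ) * ((c:ℤ) - 1) * ((lam : ℤ) - c + 2) := by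
    have hexp : ∀ w, n w * (n w - 1)
        = ∑ s ∈ t, ∑ s' ∈ t.erase s, ind w s * ind w s' := by
      intro w
      have hsq : ∀ s, ind w s * ind w s = ind w s := by
        intro s; by_cases h : G.Adj w s <;> simp [hind, h]
      have h1 : n w * n w = ∑ s ∈ t, ∑ s' ∈ t, ind w s * ind w s' := by
        rw [hn, Finset.sum_mul_sum]
      have h2 : ∀ s ∈ t, (∑ s' ∈ t, ind w s * ind w s')
          = ind w s + ∑ s' ∈ t.erase s, ind w s * ind w s' := by
        intro s hs
        rw [← Finset.add_sum_erase t _ hs, hsq]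
      have h3 : n w * n w
          = n w + ∑ s ∈ t, ∑ s' ∈ t.erase s, ind w s * ind w s' := by
        rw [h1, Finset.sum_congr rfl h2, Finset.sum_add_distrib, hn]
      linarith [h3]
    rw [Finset.sum_congr rfl fun w _ => hexp w]
    rw [Finset.sum_comm]
    have hinner : ∀ s ∈ t, (∑ w ∈ tᶜ, ∑ s' ∈ t.erase s, ind w s * ind w s')
        = ((c:ℤ) - 1) * ((lam : ℤ) - ((c:ℤ) - 2)) := by
      intro s hs
      rw [Finset.sum_comm]
      have : ∀ s' ∈ t.erase s, (∑ w ∈ tᶜ, ind w s * ind w s')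
          = (lam : ℤ) - ((c:ℤ) - 2) := by
        intro s' hs'
        have hmem := Finset.mem_erase.mp hs'
        exact hB s hs s' hmem.2 (Ne.symm hmem.1)
      rw [Finset.sum_congr rfl this, Finset.sum_const,
        Finset.card_erase_of_mem hs, hcardt]
      have h1 : (1:ℕ) ≤ c := by omega
      rw [nsmul_eq_mul, Nat.cast_sub h1]
      push_cast
      ring
    rw [Finset.sum_congr rfl hinner, Finset.sum_const, hcardt]
    push_cast
    ring
  -- Final identity
  have hfinal : cliqueAdjPolyInt v k lam b c
      = ∑ w ∈ tᶜ, (n w - b) * (n w - b - 1) := by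
    have hexp : (∑ w ∈ tᶜ, (n w - b) * (n w - b - 1))
        = (∑ w ∈ tᶜ, n w * (n w - 1)) - 2 * b * (∑ w ∈ tᶜ, n w)
          + b * (b + 1) * (∑ _w ∈ tᶜ, (1:ℤ)) := by
      rw [Finset.mul_sum, Finset.mul_sum, ← Finset.sum_sub_distrib,
        ← Finset.sum_add_distrib]
      exact Finset.sum_congr rfl fun w _ => by ring
    rw [hexp, hS1, hS2, hS3, cliqueAdjPolyInt]
    ring
  rw [hfinal]
  apply Finset.sum_nonneg
  intro w _
  rcases le_or_gt (n w - b) 0 with h | h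
  · nlinarith [h]
  · have : (1:ℤ) ≤ n w - b := h
    exact mul_nonneg (by linarith) (by linarith)
end

section
/- Let v, k, λ, μ, r, s be real numbers satisfying (v−k−1)μ = k(k−λ−1), λ − μ = r + s, μ − k = r·s, and s ≠ 0, and let C(x, y) = x(x+1)(v−y) − 2xy(k−y+1) + y(y−1)(λ−y+2). Then C(−μ/s, 2 − k/s) = (2s − r)(r + 1). In particular, if moreover s < 0 ≤ r, then C(−μ/s, 2 − k/s) < 0. -/
/-- The clique adjacency polynomial. -/
noncomputable def cliqueAdjPoly (v k lam : ℝ) (x y : ℝ) : ℝ :=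
  x * (x + 1) * (v - y) - 2 * x * y * (k - y + 1) + y * (y - 1) * (lam - y + 2)

/-- the algebraic identity of Lemma 4.3 (`lem:CAP0`). -/
theorem stmt_6 (v k lam mu r s : ℝ)
    (h1 : (v - k - 1) * mu = k * (k - lam - 1))
    (h2 : lam - mu = r + s)
    (h3 : mu - k = r * s)
    (hs : s ≠ 0) :
    cliqueAdjPoly v k lam (-mu / s) (2 - k / s) = (2 * s - r) * (r + 1) ∧
      (s < 0 → 0 ≤ r → cliqueAdjPoly v k lam (-mu / s) (2 - k / s) < 0) := by
  have hmu : mu = k + r * s := by linarith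
  have hlam : lam = k + r * s + r + s := by linarith
  subst hmu hlam
  have key : cliqueAdjPoly v k (k + r * s + r + s) (-(k + r * s) / s) (2 - k / s)
      = (2 * s - r) * (r + 1) := by
    unfold cliqueAdjPoly
    field_simp
    linear_combination (k + r*s - s)*s*h1
  refine ⟨key, fun hsneg hr => ?_⟩
  rw [key]
  have : 2 * s - r < 0 := by linarith
  nlinarith
end

section
/- Let v, k, λ, μ, r, s be real numbers satisfying the type-I relations k = (v−1)/2, λ = (v−5)/4, μ = (v−1)/4, together with r + s = λ − μ and r·s = μ − k, and let C(x, y) = x(x+1)(v−y) − 2xy(k−y+1) + y(y−1)(λ−y+2). Then for every real number t, C(r − t, 3 + 2r − 2t) = 2(t − 1)(t + s − 2)(t + 2s). -/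
/-- Lemma `lem:CAP2.0`, identity (1). -/
theorem stmt_7 (v k lam mu r s : ℝ)
    (hk : k = (v - 1) / 2) (hlam : lam = (v - 5) / 4) (hmu : mu = (v - 1) / 4)
    (hsum : r + s = lam - mu) (hprod : r * s = mu - k) :
    ∀ t : ℝ, cliqueAdjPoly v k lam (r - t) (3 + 2 * r - 2 * t) =
      2 * (t - 1) * (t + s - 2) * (t + 2 * s) := by
  intro t
  have hs : s = -1 - r := by rw [hlam, hmu] at hsum; linarith
  have hv : v = 1 + 4 * r * (1 + r) := by
    rw [hmu, hk, hs] at hprod; nlinarith [hprod]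
  subst hs hv hk hlam
  unfold cliqueAdjPoly
  ring
end

section
/- Let Γ be a type-I strongly regular graph, i.e. a strongly regular graph with parameters (v, k, λ, μ) = (4m+1, 2m, m−1, m) for some integer m ≥ 1, and let C(x, y) = x(x+1)(v−y) − 2xy(k−y+1) + y(y−1)(λ−y+2) be its clique adjacency polynomial. Then C(⌊(√v − 1)/2⌋, ⌊√v + 1⌋) < 0. -/
/-- Corollary `cor:meetDelsarte` for type-I strongly regular graphs. -/
theorem stmt_9 {V : Type*} [Fintype V] [DecidableEq V] (G : SimpleGraph V) [DecidableRel G.Adj]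
    (m : ℕ) (hm : 1 ≤ m)
    (hsrg : G.IsSRGWith (4 * m + 1) (2 * m) (m - 1) m)
    (hnoncomplete : G ≠ ⊤) (hedge : G ≠ ⊥) :
    cliqueAdjPoly (4 * m + 1) (2 * m) ((m : ℝ) - 1)
      (⌊(Real.sqrt (4 * m + 1) - 1) / 2⌋ : ℤ) (⌊Real.sqrt (4 * m + 1) + 1⌋ : ℤ) < 0 := by
  set s : ℝ := Real.sqrt (4 * m + 1) with hs
  set n : ℕ := Nat.sqrt (4 * m + 1) with hn
  have hs0 : 0 ≤ s := Real.sqrt_nonneg _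
  have hsq : s ^ 2 = 4 * m + 1 := Real.sq_sqrt (by positivity)
  have hn2 : 2 ≤ n := Nat.le_sqrt.mpr (by omega)
  have hn1 : n ^ 2 ≤ 4 * m + 1 := Nat.sqrt_le' _
  have hn1' : 4 * m + 1 < (n + 1) ^ 2 := Nat.lt_succ_sqrt' _
  have hn1r : ((n : ℝ)) ^ 2 ≤ 4 * m + 1 := by exact_mod_cast hn1
  have hn1r' : (4 * m + 1 : ℝ) < ((n : ℝ) + 1) ^ 2 := by exact_mod_cast hn1'
  have hnle : (n : ℝ) ≤ s := by nlinarith [Nat.cast_nonneg (α := ℝ) n]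
  have hltn : s < n + 1 := by nlinarith [Nat.cast_nonneg (α := ℝ) n]
  have hy : (⌊s + 1⌋ : ℤ) = (n : ℤ) + 1 := by
    rw [Int.floor_eq_iff]
    constructor
    · push_cast; linarith
    · push_cast; linarith
  rcases Nat.even_or_odd n with ⟨t, ht⟩ | ⟨t, ht⟩
  · -- n = t + t, x = t - 1, y = 2t + 1
    have ht1 : 1 ≤ t := by omega
    have htr : (1 : ℝ) ≤ t := by exact_mod_cast ht1
    have hnr : (n : ℝ) = 2 * t := by rw [ht]; push_cast; ring
    have hx : (⌊(s - 1) / 2⌋ : ℤ) = (t : ℤ) - 1 := by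
      rw [Int.floor_eq_iff]
      constructor
      · push_cast; linarith [hnle, hnr.symm.trans_le hnle]
      · push_cast
        have := hltn; rw [hnr] at this; linarith
    have hmlt : m < t * t + t := by
      rw [ht] at hn1'; nlinarith [hn1']
    have hmle' : (m : ℝ) ≤ (t : ℝ) * t + t - 1 := by
      have h : (m : ℝ) + 1 ≤ (t : ℝ) * t + t := by exact_mod_cast hmlt
      linarith
    rw [hx, hy, cliqueAdjPoly]
    push_cast [hnr]
    nlinarith [mul_le_mul_of_nonneg_left hmle' (by linarith : (0:ℝ) ≤ (t:ℝ) + 2)]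
  · -- n = 2t + 1, x = t, y = 2t + 2
    have hnr : (n : ℝ) = 2 * t + 1 := by rw [ht]; push_cast; ring
    have hx : (⌊(s - 1) / 2⌋ : ℤ) = (t : ℤ) := by
      rw [Int.floor_eq_iff]
      constructor
      · push_cast
        have := hnle; rw [hnr] at this; linarith
      · push_cast
        have := hltn; rw [hnr] at this; linarith
    have hmle : m ≤ t * t + 2 * t := by
      rw [ht] at hn1'; nlinarith [hn1']
    have hmle' : (m : ℝ) ≤ (t : ℝ) * t + 2 * t := by exact_mod_cast hmle
    rw [hx, hy, cliqueAdjPoly]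
    push_cast [hnr]
    nlinarith [mul_le_mul_of_nonneg_left hmle' (by positivity : (0:ℝ) ≤ (t:ℝ) + 1), Nat.cast_nonneg (α := ℝ) t]
end

section
/- Let Γ be a type-I strongly regular graph, i.e. a strongly regular graph with parameters (v, k, λ, μ) = (4m+1, 2m, m−1, m) for some integer m ≥ 1, and let C(x, y) = x(x+1)(v−y) − 2xy(k−y+1) + y(y−1)(λ−y+2) be its clique adjacency polynomial. Suppose that 0 < frac(√v / 2) < 1/4 + (√v − √(v + 5/4))/2, where frac(a) = a − ⌊a⌋. Then C(⌊(√v − 1)/2⌋, ⌊√v⌋) < 0. -/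
set_option maxHeartbeats 1000000 in
/-- Corollary `cor:beatDelsarte` for type-I strongly regular graphs. -/
theorem stmt_10 {V : Type*} [Fintype V] [DecidableEq V] (G : SimpleGraph V) [DecidableRel G.Adj]
    (m : ℕ) (hm : 1 ≤ m)
    (hsrg : G.IsSRGWith (4 * m + 1) (2 * m) (m - 1) m)
    (hnoncomplete : G ≠ ⊤) (hedge : G ≠ ⊥)
    (hfrac1 : 0 < Int.fract (Real.sqrt (4 * m + 1) / 2))
    (hfrac2 : Int.fract (Real.sqrt (4 * m + 1) / 2) <
      1 / 4 + (Real.sqrt (4 * m + 1) - Real.sqrt ((4 * m + 1 : ℝ) + 5 / 4)) / 2) :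
    cliqueAdjPoly (4 * m + 1) (2 * m) ((m : ℝ) - 1)
      (⌊(Real.sqrt (4 * m + 1) - 1) / 2⌋ : ℤ) (⌊Real.sqrt (4 * m + 1)⌋ : ℤ) < 0 := by
  set s : ℝ := Real.sqrt (4 * m + 1) with hs
  set t : ℝ := Real.sqrt ((4 * m + 1 : ℝ) + 5 / 4) with ht
  have hv5 : (5 : ℝ) ≤ 4 * m + 1 := by
    have : (1 : ℝ) ≤ m := by exact_mod_cast hm
    linarith
  have hs2 : s ^ 2 = 4 * m + 1 := Real.sq_sqrt (by linarith)
  have ht2 : t ^ 2 = (4 * m + 1 : ℝ) + 5 / 4 := Real.sq_sqrt (by linarith)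
  have hsle : (2 : ℝ) < s := by
    nlinarith [Real.sqrt_nonneg ((4 : ℝ) * m + 1)]
  have hts : s < t := by
    have := Real.sqrt_lt_sqrt (by linarith : (0:ℝ) ≤ 4 * m + 1)
      (by linarith : (4 * m + 1 : ℝ) < (4 * m + 1 : ℝ) + 5 / 4)
    simpa [hs, ht] using this
  set f : ℝ := Int.fract (s / 2) with hf
  set n : ℤ := ⌊s / 2⌋ with hn
  have hsf : s / 2 = n + f := by rw [hf, hn, Int.fract]; ring
  have hf0 : 0 < f := hfrac1
  have hf14 : f < 1 / 4 := by
    have : (s - t) / 2 < 0 := by linarith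
    linarith
  have hn1 : (1 : ℤ) ≤ n := by
    rw [hn]; rw [Int.le_floor]; push_cast; linarith
  have hN1 : (1 : ℝ) ≤ (n : ℝ) := by exact_mod_cast hn1
  -- floor computations
  have hfloors : ⌊s⌋ = 2 * n := by
    rw [Int.floor_eq_iff]
    push_cast
    constructor <;> nlinarith
  have hfloorx : ⌊(s - 1) / 2⌋ = n - 1 := by
    rw [Int.floor_eq_iff]
    push_cast
    constructor <;> nlinarith
  -- positivity of the key factor
  have hcond : 0 < s * (1 - 4 * f) + (1 / 2 - 2 * f) ^ 2 - 5 / 4 := by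
    have hR : t < s + 1 / 2 - 2 * f := by linarith
    have htn : (0 : ℝ) ≤ t := Real.sqrt_nonneg _
    nlinarith [sq_nonneg (s + 1 / 2 - 2 * f - t)]
  rw [hfloorx, hfloors]
  have key : cliqueAdjPoly (4 * m + 1) (2 * m) ((m : ℝ) - 1)
      ((n : ℝ) - 1) (2 * n) =
      -((n : ℝ) / 2) * (s * (1 - 4 * f) + (1 / 2 - 2 * f) ^ 2 - 5 / 4) := by
    have hm2 : (m : ℝ) = (s ^ 2 - 1) / 4 := by rw [hs2]; ring
    have hse : s = 2 * (n : ℝ) + 2 * f := by linarith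
    rw [cliqueAdjPoly, hm2, hse]; ring
  push_cast
  rw [key]
  nlinarith
end

section
/- Let v, k, λ, μ, r, s be real numbers satisfying (v−k−1)μ = k(k−λ−1), λ − μ = r + s, μ − k = r·s, and s ≠ 0, and let C(x, y) = x(x+1)(v−y) − 2xy(k−y+1) + y(y−1)(λ−y+2). Then for every real number t, C(−μ/s − t, 2 − k/s − t) = (t − 1)·((v − 2k + λ)t − (2s − r)(r + 1)). -/
/-- Lemma `lem:CAP1`, identity (3). -/
theorem stmt_11 (v k lam mu r s : ℝ)
    (h1 : (v - k - 1) * mu = k * (k - lam - 1))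
    (h2 : lam - mu = r + s)
    (h3 : mu - k = r * s)
    (hs : s ≠ 0) :
    ∀ t : ℝ, cliqueAdjPoly v k lam (-mu / s - t) (2 - k / s - t) =
      (t - 1) * ((v - 2 * k + lam) * t - (2 * s - r) * (r + 1)) := by
  intro t
  have hmu : mu = k + r * s := by linarith
  have hlam : lam = k + r * s + r + s := by linarith
  subst hmu hlam
  unfold cliqueAdjPoly
  field_simp
  linear_combination (s ^ 2 * (2 * t - 1 + r) + k * s) * h1
end

section
/- Let v, k, λ, μ, r, s be real numbers satisfying (v−k−1)μ = k(k−λ−1), λ − μ = r + s, μ − k = r·s, and s ≠ 0, and let C(x, y) = x(x+1)(v−y) − 2xy(k−y+1) + y(y−1)(λ−y+2). Then for every real number t, C(−μ/s − t, 1 − k/s − t) = t·((v − 2k + λ)(t − 1) + r(r + 1)). -/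
/-- Lemma `lem:CAP1`, identity (4). -/
theorem stmt_12 (v k lam mu r s : ℝ)
    (h1 : (v - k - 1) * mu = k * (k - lam - 1))
    (h2 : lam - mu = r + s)
    (h3 : mu - k = r * s)
    (hs : s ≠ 0) :
    ∀ t : ℝ, cliqueAdjPoly v k lam (-mu / s - t) (1 - k / s - t) =
      t * ((v - 2 * k + lam) * (t - 1) + r * (r + 1)) := by
  have hmu : mu = k + r * s := by linarith
  subst hmu
  have hlam : lam = k + r * s + r + s := by linarith
  subst hlam
  intro t
  unfold cliqueAdjPoly
  field_simp
  linear_combination (s * (2 * t * s + k + r * s - s)) * h1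
end

section
/- Let Γ be a strongly regular graph with parameters (v, k, λ, μ), and suppose Γ is type II: there exist integers r and s with r ≥ s, s < 0, r + s = λ − μ and r·s = μ − k. Let C(x, y) = x(x+1)(v−y) − 2xy(k−y+1) + y(y−1)(λ−y+2) be the clique adjacency polynomial of Γ. Then C(⌊−μ/s⌋, ⌊2 − k/s⌋) < 0, where the quotients −μ/s and 2 − k/s are taken in ℝ (or ℚ). -/
private lemma floor_int_div_real (a b : ℤ) (hb : 0 < b) : ⌊(a : ℝ) / (b : ℝ)⌋ = a / b := by
  have hb' : (0 : ℝ) < (b : ℝ) := by exact_mod_cast hb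
  have h1 : b * (a / b) + a % b = a := Int.mul_ediv_add_emod a b
  have h2 : 0 ≤ a % b := Int.emod_nonneg a hb.ne'
  have h3 : a % b < b := Int.emod_lt_of_pos a hb
  refine Int.floor_eq_iff.mpr ⟨?_, ?_⟩
  · rw [le_div_iff₀ hb']
    exact_mod_cast show (a / b) * b ≤ a by nlinarith
  · rw [div_lt_iff₀ hb']
    have : (a : ℝ) < ((a / b : ℤ) + 1) * b := by exact_mod_cast show a < (a / b + 1) * b by nlinarith
    exact_mod_cast this

private lemma key_identity (q r t e v k mu lam : ℤ)
    (hk : k = q * t + e) (hmu : mu = k - r * t) (hlam : lam = mu + r - t)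
    (hv : mu * (v - k - 1) = k * (k - lam - 1)) :
    mu * cliqueAdjPolyInt v k lam (q - r) (q + 2) =
      -((t - e) * (r + 1) * ((r + 2) * e + (q - r) * (r + 2 * t))) := by
  subst hlam hmu hk
  unfold cliqueAdjPolyInt
  linear_combination ((q - r) * (q - r + 1)) * hv

private lemma le_of_mu (q r t e k mu : ℤ) (ht : 0 < t) (he1 : e < t)
    (hk : k = q * t + e) (hmu : mu = k - r * t) (hmu1 : 1 ≤ mu) : r ≤ q := by
  by_contra h
  push_neg at h
  have h1 : q - r ≤ -1 := by omega
  have h2 : (q - r) * t ≤ (-1) * t := mul_le_mul_of_nonneg_right h1 ht.le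
  nlinarith

private lemma bracket_pos (q r t e mu : ℤ) (hr0 : 0 ≤ r) (ht : 0 < t)
    (he0 : 0 ≤ e) (he1 : e < t) (hqr : r ≤ q)
    (hmu : mu = (q * t + e) - r * t) (hmu1 : 1 ≤ mu) :
    1 ≤ (r + 2) * e + (q - r) * (r + 2 * t) := by
  rcases eq_or_lt_of_le hqr with h | h
  · have he1' : 1 ≤ e := by nlinarith
    nlinarith
  · nlinarith

/-- Corollary `cor:meetDelsarte1` for type-II strongly regular graphs. -/
theorem stmt_13 {V : Type*} [Fintype V] [DecidableEq V] (G : SimpleGraph V) [DecidableRel G.Adj]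
    (v k lam μ : ℕ) (hsrg : G.IsSRGWith v k lam μ)
    (hnoncomplete : G ≠ ⊤) (hedge : G ≠ ⊥)
    (r s : ℤ) (hrs : s ≤ r) (hs : s < 0)
    (hsum : r + s = (lam : ℤ) - μ) (hprod : r * s = (μ : ℤ) - k) :
    cliqueAdjPolyInt v k lam ⌊-(μ : ℝ) / s⌋ ⌊2 - (k : ℝ) / s⌋ < 0 := by
  -- basic graph facts
  obtain ⟨a, b, hab⟩ : ∃ a b, G.Adj a b := by
    by_contra h
    push_neg at h
    exact hedge (by ext a b; simp [h a b])
  obtain ⟨c, d, hcd, hncd⟩ : ∃ c d, c ≠ d ∧ ¬G.Adj c d := by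
    by_contra h
    push_neg at h
    exact hnoncomplete (by ext a b; exact ⟨fun h' => h'.ne, fun h' => h a b h'⟩)
  have hk1 : 1 ≤ k := by
    have := (G.degree_pos_iff_exists_adj a).mpr ⟨b, hab⟩
    rwa [hsrg.regular a] at this
  have hlamk : lam + 1 ≤ k := by
    have := hab.card_commonNeighbors_lt_degree
    rwa [hsrg.regular a, hsrg.of_adj a b hab] at this
  have hmuk : μ ≤ k := by
    have := G.card_commonNeighbors_le_degree_left c d
    rwa [hsrg.regular c, hsrg.of_not_adj hcd hncd] at this
  have hkv : k + 1 ≤ v := by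
    have := G.degree_lt_card_verts a
    rwa [hsrg.regular a, hsrg.card] at this
  have hid : (k : ℤ) * ((k : ℤ) - lam - 1) = ((v : ℤ) - k - 1) * μ := by
    have h := hsrg.param_eq (G := G) (by omega)
    zify [show lam ≤ k by omega, show 1 ≤ k - lam by omega,
      show k ≤ v by omega, show 1 ≤ v - k by omega] at h
    linarith
  have hr0 : 0 ≤ r := by
    by_contra h
    push_neg at h
    have : 0 < r * s := mul_pos_of_neg_of_neg h hs
    have : (μ : ℤ) ≤ (k : ℤ) := by exact_mod_cast hmuk
    omega
  clear hab hncd hcd hnoncomplete hedge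
  by_cases hmu0 : μ = 0
  · -- disjoint union of cliques case: s = -1
    subst hmu0
    have hlamI : (lam : ℤ) = (k : ℤ) - 1 := by
      have h0 : (k : ℤ) * ((k : ℤ) - lam - 1) = 0 := by rw [hid]; push_cast; ring
      have hk0 : (k : ℤ) ≠ 0 := by positivity
      rcases mul_eq_zero.mp h0 with h | h
      · exact absurd h hk0
      · linarith
    have hs1 : s = -1 := by
      have hfac : (s + 1) * (s - (k : ℤ)) = 0 := by
        push_cast at hsum hprod
        linear_combination s * hsum - hprod + s * hlamI
      rcases mul_eq_zero.mp hfac with h | h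
      · linarith
      · have : (0 : ℤ) ≤ (k : ℤ) := by positivity
        omega
    subst hs1
    have hx : ⌊-((0 : ℕ) : ℝ) / ((-1 : ℤ) : ℝ)⌋ = 0 := by norm_num
    have hy : ⌊2 - (k : ℝ) / ((-1 : ℤ) : ℝ)⌋ = (k : ℤ) + 2 := by
      rw [show 2 - (k : ℝ) / ((-1 : ℤ) : ℝ) = (((k : ℤ) + 2 : ℤ) : ℝ) by push_cast; ring]
      exact Int.floor_intCast _
    rw [hx, hy]
    have heval : cliqueAdjPolyInt (v : ℤ) (k : ℤ) (lam : ℤ) 0 ((k : ℤ) + 2) =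
        -(((k : ℤ) + 2) * ((k : ℤ) + 1)) := by
      unfold cliqueAdjPolyInt; rw [hlamI]; ring
    rw [heval]
    have : (0 : ℤ) < ((k : ℤ) + 2) * ((k : ℤ) + 1) := by positivity
    omega
  · -- main case: μ ≥ 1
    have hmu1 : (1 : ℤ) ≤ (μ : ℤ) := by exact_mod_cast Nat.one_le_iff_ne_zero.mpr hmu0
    set t : ℤ := -s with hts
    have ht : 0 < t := by omega
    have hst : s = -t := by omega
    have hmuI : (μ : ℤ) = (k : ℤ) - r * t := by
      rw [hst] at hprod; linarith
    have hlamI : (lam : ℤ) = (μ : ℤ) + r - t := by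
      rw [hst] at hsum; linarith
    set q : ℤ := (k : ℤ) / t with hq
    set e : ℤ := (k : ℤ) % t with he
    have hqe : (k : ℤ) = q * t + e := by
      have := Int.mul_ediv_add_emod (k : ℤ) t
      rw [hq, he]; linarith
    have he0 : 0 ≤ e := Int.emod_nonneg _ ht.ne'
    have he1 : e < t := Int.emod_lt_of_pos _ ht
    clear_value q e
    have hx : ⌊-(μ : ℝ) / (s : ℝ)⌋ = q - r := by
      have h1 : -(μ : ℝ) / (s : ℝ) = ((μ : ℤ) : ℝ) / ((t : ℤ) : ℝ) := by
        rw [hst]; push_cast; ring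
      rw [h1, floor_int_div_real _ _ ht]
      rw [show (μ : ℤ) = (k : ℤ) + (-r) * t by linarith]
      rw [Int.add_mul_ediv_right _ _ ht.ne', hq]
      ring
    have hy : ⌊2 - (k : ℝ) / (s : ℝ)⌋ = q + 2 := by
      have h1 : 2 - (k : ℝ) / (s : ℝ) = ((k : ℤ) : ℝ) / ((t : ℤ) : ℝ) + ((2 : ℤ) : ℝ) := by
        rw [hst]; push_cast; ring
      rw [h1, Int.floor_add_intCast, floor_int_div_real _ _ ht, hq]
    rw [hx, hy]
    have hqr : r ≤ q := le_of_mu q r t e (k : ℤ) (μ : ℤ) ht he1 hqe hmuI hmu1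
    have hM := key_identity q r t e (v : ℤ) (k : ℤ) (μ : ℤ) (lam : ℤ) hqe hmuI hlamI
      (by linear_combination -hid)
    have hbr : 1 ≤ (r + 2) * e + (q - r) * (r + 2 * t) :=
      bracket_pos q r t e (μ : ℤ) hr0 ht he0 he1 hqr (by linarith) hmu1
    have hRHS : -((t - e) * (r + 1) * ((r + 2) * e + (q - r) * (r + 2 * t))) < 0 := by
      have h1 : 0 < (t - e) * (r + 1) * ((r + 2) * e + (q - r) * (r + 2 * t)) := by
        apply mul_pos (mul_pos (by omega) (by omega)) (by omega)
      omega
    by_contra hc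
    push_neg at hc
    have : 0 ≤ (μ : ℤ) * cliqueAdjPolyInt v k lam (q - r) (q + 2) :=
      mul_nonneg (by positivity) hc
    omega
end

section
/- Let Γ be a strongly regular graph with parameters (v, k, λ, μ), let r ≥ s be the real roots of x² − (λ−μ)x − (k−μ) (the eigenvalues of Γ other than k), with s < 0, and let C(x, y) = x(x+1)(v−y) − 2xy(k−y+1) + y(y−1)(λ−y+2) be the clique adjacency polynomial of Γ. Suppose that λ + 1 ≤ −k/s. Then the clique adjacency bound of Γ equals λ + 2; that is, λ + 2 is the least integer c ≥ 2 such that C(b, c+1) < 0 for some integer b. -/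
private lemma quad_scaled (a b c x0 w d x : ℝ) (hd : 0 < d) (ha : 0 ≤ a)
    (hx0 : x0 ≤ x) (hx1 : x * d ≤ w)
    (h0 : a * x0 ^ 2 + b * x0 + c ≤ 0) (h1 : a * w ^ 2 + b * w * d + c * d ^ 2 ≤ 0) :
    a * x ^ 2 + b * x + c ≤ 0 := by
  have hxd : x0 * d ≤ x * d := mul_le_mul_of_nonneg_right hx0 hd.le
  have hw0 : x0 * d ≤ w := le_trans hxd hx1
  rcases eq_or_lt_of_le hw0 with heq | hlt
  · have hx : x = x0 := le_antisymm (le_of_mul_le_mul_right (by linarith) hd) hx0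
    rw [hx]; exact h0
  · have hlt' : (0:ℝ) < w - x0 * d := by linarith
    have T1 : (0:ℝ) ≤ (w - x*d) * d^2 := mul_nonneg (by linarith) (by positivity)
    have T2 : (0:ℝ) ≤ (x - x0) * d := mul_nonneg (by linarith) hd.le
    have T3 : (0:ℝ) ≤ a * d * ((x - x0) * ((w - x*d) * (w - x0*d))) :=
      mul_nonneg (mul_nonneg ha hd.le)
        (mul_nonneg (by linarith) (mul_nonneg (by linarith) (by linarith)))
    have T4 : (0:ℝ) < (w - x0*d) * d^2 := mul_pos (by linarith) (by positivity)
    nlinarith [T1, T2, T3, T4, mul_nonneg T1 (neg_nonneg.2 h0), mul_nonneg T2 (neg_nonneg.2 h1)]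

private lemma disc1 (y z e A : ℝ) (hy : 3 ≤ y) (hz : 1 ≤ z) (he : 1 ≤ e)
    (hA : (y+z)*e + z ≤ A) (hB : 3*A ≤ 2*y*(e+z)) :
    (2*y*(e+z) - A)^2 ≤ 4*A*(y*(y-1)*z) := by
  have hcon : e*(y+3*z) ≤ (2*y-3)*z := by nlinarith
  have h0 : (y-z)^2*(1:ℝ)^2 + (2*(y-z)*(2*y-1)*z-4*(y*(y-1)*z)*(y+z))*1
      + ((2*y-1)^2*z^2-4*(y*(y-1))*z^2) ≤ 0 := by
    nlinarith [mul_nonneg (mul_nonneg (by linarith : (0:ℝ) ≤ y) (by linarith : (0:ℝ) ≤ z-1))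
        (sq_nonneg (y-1)), mul_nonneg (by linarith : (0:ℝ) ≤ y-3) (by linarith : (0:ℝ) ≤ z),
      sq_nonneg (2*y-3), mul_pos (by linarith : (0:ℝ) < y) (by linarith : (0:ℝ) < z)]
  have h1 : (y-z)^2*((2*y-3)*z)^2 + (2*(y-z)*(2*y-1)*z-4*(y*(y-1)*z)*(y+z))*((2*y-3)*z)*(y+3*z)
      + ((2*y-1)^2*z^2-4*(y*(y-1))*z^2)*(y+3*z)^2 ≤ 0 := by
    have key : (y-z)^2*((2*y-3)*z)^2 + (2*(y-z)*(2*y-1)*z-4*(y*(y-1)*z)*(y+z))*((2*y-3)*z)*(y+3*z)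
      + ((2*y-1)^2*z^2-4*(y*(y-1))*z^2)*(y+3*z)^2
      = -(4*(2*y*z*(y+z-1)) * ((y*(y-1)*z)*(y+3*z) - 2*y*z*(y+z-1))) := by ring
    rw [key, neg_nonpos]
    apply mul_nonneg
    · nlinarith
    · nlinarith [mul_pos (by linarith : (0:ℝ) < y) (by linarith : (0:ℝ) < z),
        mul_nonneg (by linarith : (0:ℝ) ≤ y-1) (by linarith : (0:ℝ) ≤ y-2)]
  have hq := quad_scaled ((y-z)^2) (2*(y-z)*(2*y-1)*z-4*(y*(y-1)*z)*(y+z))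
      ((2*y-1)^2*z^2-4*(y*(y-1))*z^2) 1 ((2*y-3)*z) (y+3*z) e
      (by linarith) (sq_nonneg _) he (by linarith) h0 h1
  have hm : (0:ℝ) ≤ y*(y-1)*z :=
    mul_nonneg (mul_nonneg (by linarith) (by linarith)) (by linarith)
  have hBpos : (0:ℝ) ≤ 2*y*(e+z) := by nlinarith
  have hup : (0:ℝ) ≤ 2*(2*y*(e+z)) + 4*(y*(y-1)*z) - A - ((y+z)*e+z) := by linarith
  have hmono : (0:ℝ) ≤ (A - ((y+z)*e+z)) * (2*(2*y*(e+z)) + 4*(y*(y-1)*z) - A - ((y+z)*e+z)) :=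
    mul_nonneg (by linarith) hup
  nlinarith [hq, hmono]

private lemma disc0 (y z A : ℝ) (hy : 3 ≤ y) (hz : 1 ≤ z)
    (hA : y + 2*z ≤ A) (hB : 3*A ≤ 2*y*z) :
    (2*y*z - A)^2 ≤ 4*A*(y*(y-1)*z) := by
  have hm : (0:ℝ) ≤ y*(y-1)*z :=
    mul_nonneg (mul_nonneg (by linarith) (by linarith)) (by linarith)
  have h0 : (2*y*z - (y+2*z))^2 ≤ 4*(y+2*z)*(y*(y-1)*z) := by
    nlinarith [mul_pos (by linarith : (0:ℝ) < y) (by linarith : (0:ℝ) < z),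
      mul_nonneg (by linarith : (0:ℝ) ≤ y-3) (by linarith : (0:ℝ) ≤ z-1),
      sq_nonneg (y - 2*z), mul_nonneg (mul_nonneg (by linarith : (0:ℝ) ≤ y) (by linarith : (0:ℝ) ≤ z)) (by linarith : (0:ℝ) ≤ y-3),
      mul_nonneg (mul_nonneg (by linarith : (0:ℝ) ≤ y) (by linarith : (0:ℝ) ≤ z)) (by linarith : (0:ℝ) ≤ z-1)]
  have hmono : (0:ℝ) ≤ (A - (y+2*z)) * (2*(2*y*z) + 4*(y*(y-1)*z) - A - (y+2*z)) :=
    mul_nonneg (by linarith) (by nlinarith)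
  nlinarith [h0, hmono]
set_option maxHeartbeats 1000000 in
private lemma main_ineq (v k lam mu y b : ℤ) (hy3 : 3 ≤ y) (hyl : y ≤ lam + 2)
    (hk1 : lam + 1 ≤ k) (hv : k + 2 ≤ v) (hmu0 : 0 ≤ mu)
    (hpe : k * (k - lam - 1) = (v - k - 1) * mu)
    (hmu0v : mu = 0 → 2*k + 2 ≤ v)
    (hkm : mu * (lam + 1) ≤ k) :
    0 ≤ b * (b + 1) * (v - y) - 2 * b * y * (k - y + 1) + y * (y - 1) * (lam - y + 2) := by
  have hz0 : 0 ≤ lam + 2 - y := by linarith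
  have hky : y ≤ k + 1 := by linarith
  have hA1 : 1 ≤ v - y := by linarith
  have hD : 0 ≤ y * (y - 1) * (lam - y + 2) :=
    mul_nonneg (mul_nonneg (by linarith) (by linarith)) (by linarith)
  rcases lt_trichotomy b 0 with hb | hb | hb
  · -- b ≤ -1
    have hb1 : b ≤ -1 := by linarith
    have h1 : 0 ≤ b * (b + 1) := by nlinarith
    have h2 : 0 ≤ (-b) * (2 * y * (k - y + 1)) :=
      mul_nonneg (by linarith) (mul_nonneg (by linarith) (by linarith))
    nlinarith [mul_nonneg h1 (by linarith : (0:ℤ) ≤ v - y)]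
  · subst hb; simpa using hD
  · -- 1 ≤ b
    have hb1 : 1 ≤ b := hb
    -- q1 ≥ 0
    have hq1 : 0 ≤ 2*(v-y) - 2*y*(k-y+1) + y*(y-1)*(lam-y+2) := by
      rcases eq_or_lt_of_le hmu0 with hm0 | hm1
      · -- mu = 0 : k = lam+1
        have hk : k = lam + 1 := by nlinarith [hpe, hm0]
        have : k - y + 1 = lam + 2 - y := by omega
        nlinarith [mul_nonneg (mul_nonneg (by linarith : (0:ℤ) ≤ y) hz0) (by linarith : (0:ℤ) ≤ y - 3)]
      · have hmy : mu * (y - 1) ≤ k := le_trans (by nlinarith) hkm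
        have hident : mu * (2*(v-y) - 2*y*(k-y+1) + y*(y-1)*(lam-y+2))
            = 2*(k-lam-1)*(k-mu*(y-1)) + mu*((lam+2-y)*((y-1)*(y-2)))
              + 2*((v-k-1)*mu - k*(k-lam-1)) := by ring
        have h2 : 0 ≤ mu * (2*(v-y) - 2*y*(k-y+1) + y*(y-1)*(lam-y+2)) := by
          rw [hident, hpe]
          have : 0 ≤ 2*(k-lam-1)*(k-mu*(y-1)) :=
            mul_nonneg (by linarith) (by linarith)
          nlinarith [mul_nonneg hmu0 (mul_nonneg (mul_nonneg hz0 (by linarith : (0:ℤ) ≤ y-1)) (by linarith : (0:ℤ) ≤ y - 2))]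
        nlinarith [h2, hm1]
    by_cases hBA : 2*y*(k - y + 1) ≤ 3*(v - y)
    · nlinarith [mul_nonneg (mul_nonneg (by linarith : (0:ℤ) ≤ v - y) (by linarith : (0:ℤ) ≤ b - 1)) (by linarith : (0:ℤ) ≤ b - 1),
        mul_nonneg (by linarith : (0:ℤ) ≤ 3*(v-y) - 2*y*(k-y+1)) (by linarith : (0:ℤ) ≤ b - 1)]
    · push_neg at hBA
      -- need z ≥ 1 and disc ≤ 0
      have hdisc : (2*y*(k-y+1) - (v-y))^2 ≤ 4*(v-y)*(y*(y-1)*(lam+2-y)) := by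
        rcases eq_or_lt_of_le hmu0 with hm0 | hm1
        · have hk : k = lam + 1 := by nlinarith [hpe, hm0]
          have hv2 : 2*k + 2 ≤ v := hmu0v hm0.symm
          have hzy : k - y + 1 = lam + 2 - y := by omega
          rw [hzy] at hBA ⊢
          have hz1 : 1 ≤ lam + 2 - y := by
            rcases eq_or_lt_of_le hz0 with h | h
            · exfalso; rw [← h] at hBA; nlinarith
            · linarith
          have hAz : y + 2*(lam+2-y) ≤ v - y := by omega
          have key := disc0 (y:ℝ) ((lam:ℝ)+2-y) ((v:ℝ)-y) (by exact_mod_cast hy3)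
            (by exact_mod_cast hz1) (by exact_mod_cast hAz)
            (by exact_mod_cast hBA.le)
          exact_mod_cast key
        · -- mu ≥ 1
          have he1 : 1 ≤ k - lam - 1 := by
            by_contra h
            push_neg at h
            have h2 : k * (k - lam - 1) ≤ 0 := mul_nonpos_iff.2 (Or.inl ⟨by linarith, by linarith⟩)
            nlinarith [mul_pos (by linarith : (0:ℤ) < v - k - 1) hm1]
          have hid : mu*(v-y) = (v-k-1)*mu + mu*((k-lam-1) + (lam+2-y)) := by ring
          rw [← hpe] at hid
          have hstep : mu*(lam+1)*(k-lam-1) ≤ k*(k-lam-1) :=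
            mul_le_mul_of_nonneg_right hkm (by linarith)
          have hAe : (lam+2)*(k-lam-1) + (lam+2-y) ≤ v - y := by
            have h3 : mu*((lam+2)*(k-lam-1) + (lam+2-y)) ≤ mu*(v-y) := by linarith [hid, hstep]
            exact le_of_mul_le_mul_left h3 hm1
          have hzy : k - y + 1 = (k-lam-1) + (lam+2-y) := by ring
          have hz1 : 1 ≤ lam + 2 - y := by
            rcases eq_or_lt_of_le hz0 with h | h
            · exfalso; rw [hzy, ← h] at hBA; nlinarith
            · linarith
          have key := disc1 (y:ℝ) ((lam:ℝ)+2-y) ((k:ℝ)-lam-1) ((v:ℝ)-y) (by exact_mod_cast hy3)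
            (by exact_mod_cast hz1) (by exact_mod_cast he1)
            (by have : (y + (lam+2-y))*(k-lam-1) + (lam+2-y) ≤ v - y := by linarith [hAe]
                exact_mod_cast this)
            (by have : 3*(v-y) ≤ 2*y*((k-lam-1) + (lam+2-y)) := by linarith [hBA, hzy]
                exact_mod_cast this)
          have key2 : (2*y*((k-lam-1)+(lam+2-y)) - (v-y))^2 ≤ 4*(v-y)*(y*(y-1)*(lam+2-y)) := by
            exact_mod_cast key
          rw [hzy]
          exact key2
      have hDD : y * (y - 1) * (lam - y + 2) = y * (y-1) * (lam + 2 - y) := by ring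
      nlinarith [hdisc, sq_nonneg (2*(v-y)*b + ((v-y) - 2*y*(k-y+1))), hA1, hDD,
        mul_pos (by linarith : (0:ℤ) < v - y) (by linarith : (0:ℤ) < b)]

set_option maxHeartbeats 1600000 in
/-- Theorem `thm:limitation`: if `λ + 1 ≤ -k/s` then the clique
adjacency bound equals `λ + 2`, i.e. `λ + 2` is the least integer `c ≥ 2` such
that `C(b, c + 1) < 0` for some integer `b`. -/
theorem stmt_16 {V : Type*} [Fintype V] [DecidableEq V] (G : SimpleGraph V) [DecidableRel G.Adj]
    (v k lam μ : ℕ) (hsrg : G.IsSRGWith v k lam μ)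
    (hnoncomplete : G ≠ ⊤) (hedge : G ≠ ⊥)
    (r s : ℝ) (hrs : s ≤ r) (hs : s < 0)
    (hr_root : r ^ 2 - ((lam : ℝ) - μ) * r - ((k : ℝ) - μ) = 0)
    (hs_root : s ^ 2 - ((lam : ℝ) - μ) * s - ((k : ℝ) - μ) = 0)
    (hlam : (lam : ℝ) + 1 ≤ -(k : ℝ) / s) :
    IsLeast {c : ℤ | 2 ≤ c ∧ ∃ b : ℤ, cliqueAdjPolyInt v k lam b (c + 1) < 0}
      ((lam : ℤ) + 2) := by
  classical
  have hnc : ∃ u w : V, u ≠ w ∧ ¬ G.Adj u w := by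
    by_contra h
    push_neg at h
    exact hnoncomplete (by
      ext a b
      simp only [SimpleGraph.top_adj]
      exact ⟨fun ha => G.ne_of_adj ha, fun hne => h a b hne⟩)
  obtain ⟨u, w, hne, hna⟩ := hnc
  have hadj : ∃ a b : V, G.Adj a b := by
    by_contra h
    push_neg at h
    exact hedge (by ext a b; simp only [SimpleGraph.bot_adj, iff_false]; exact h a b)
  obtain ⟨a, b', hab⟩ := hadj
  have hlamk : lam + 1 ≤ k := by
    have h1 := hsrg.of_adj a b' hab
    have h2 := hab.card_commonNeighbors_lt_degree
    rw [h1, hsrg.regular a] at h2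
    omega
  have hmuk : μ ≤ k := by
    have h1 := hsrg.of_not_adj hne hna
    have h2 := G.card_commonNeighbors_le_degree_left u w
    rw [h1, hsrg.regular u] at h2
    exact h2
  have hcard : Fintype.card V = v := hsrg.card
  have hwNu : w ∉ G.neighborFinset u := fun hmem =>
    hna ((SimpleGraph.mem_neighborFinset _ _ _).1 hmem)
  have huNu : u ∉ G.neighborFinset u := by simp
  have hvk : k + 2 ≤ v := by
    have hsub : (insert u (insert w (G.neighborFinset u))).card ≤ v := by
      rw [← hcard]; exact Finset.card_le_univ _
    have hu : u ∉ insert w (G.neighborFinset u) := by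
      simp only [Finset.mem_insert]
      rintro (h | h)
      · exact hne h
      · exact huNu h
    rw [Finset.card_insert_of_notMem hu, Finset.card_insert_of_notMem hwNu,
      G.card_neighborFinset_eq_degree, hsrg.regular u] at hsub
    omega
  have hmu0v : μ = 0 → 2*k + 2 ≤ v := by
    intro hm0
    have hcc := hsrg.of_not_adj hne hna
    rw [hm0] at hcc
    have hempty : G.commonNeighbors u w = ∅ := by
      have := Fintype.card_eq_zero_iff.1 hcc
      rwa [Set.isEmpty_coe_sort] at this
    have hdisj : Disjoint (G.neighborFinset u) (G.neighborFinset w) := by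
      rw [Finset.disjoint_left]
      intro x hxu hxw
      have hx : x ∈ G.commonNeighbors u w := by
        rw [SimpleGraph.mem_commonNeighbors]
        exact ⟨(SimpleGraph.mem_neighborFinset _ _ _).1 hxu,
          (SimpleGraph.mem_neighborFinset _ _ _).1 hxw⟩
      rw [hempty] at hx
      exact absurd hx (Set.notMem_empty x)
    have hwm : w ∉ G.neighborFinset u ∪ G.neighborFinset w := by
      simp only [Finset.mem_union]
      rintro (h | h)
      · exact hwNu h
      · simp at h
    have hum : u ∉ insert w (G.neighborFinset u ∪ G.neighborFinset w) := by
      simp only [Finset.mem_insert, Finset.mem_union]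
      rintro (h | h | h)
      · exact hne h
      · exact huNu h
      · exact hna (G.adj_symm ((SimpleGraph.mem_neighborFinset _ _ _).1 h))
    have hsub : (insert u (insert w (G.neighborFinset u ∪ G.neighborFinset w))).card ≤ v := by
      rw [← hcard]; exact Finset.card_le_univ _
    rw [Finset.card_insert_of_notMem hum, Finset.card_insert_of_notMem hwm,
      Finset.card_union_of_disjoint hdisj, G.card_neighborFinset_eq_degree,
      G.card_neighborFinset_eq_degree, hsrg.regular u, hsrg.regular w] at hsub
    omega
  have hpe := SimpleGraph.IsSRGWith.param_eq G hsrg (by omega)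
  have hpeZ : (k:ℤ) * ((k:ℤ) - lam - 1) = ((v:ℤ) - k - 1) * μ := by
    rw [show k - lam - 1 = k - (lam+1) from by omega,
        show v - k - 1 = v - (k+1) from by omega] at hpe
    have hZ : ((k * (k - (lam+1)) : ℕ) : ℤ) = (((v - (k+1)) * μ : ℕ) : ℤ) := by
      exact_mod_cast congrArg (Nat.cast (R := ℤ)) hpe
    push_cast [Nat.cast_sub hlamk, Nat.cast_sub (show k+1 ≤ v by omega)] at hZ
    linarith [hZ]
  have hvkZ : (k:ℤ) + 2 ≤ v := by exact_mod_cast hvk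
  have hlamkZ : (lam:ℤ) + 1 ≤ k := by exact_mod_cast hlamk
  have hns : (0:ℝ) < -s := by linarith
  have hkmZ : (μ:ℤ) * ((lam:ℤ) + 1) ≤ k := by
    rcases Nat.eq_zero_or_pos μ with hm0 | hm1
    · rw [hm0]; simpa using Int.natCast_nonneg k
    · have hm1Z : (1:ℤ) ≤ μ := by exact_mod_cast hm1
      have he1 : (lam:ℤ) + 2 ≤ k := by
        by_contra h
        push_neg at h
        have h1 : (k:ℤ) - lam - 1 ≤ 0 := by omega
        have h2 : (0:ℤ) < ((v:ℤ)-k-1)*μ :=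
          mul_pos (by omega) (by exact_mod_cast hm1)
        nlinarith [hpeZ, Int.natCast_nonneg k]
      have hE2 : ((lam:ℝ)+1) * (-s) ≤ k := by
        have h1 := mul_le_mul_of_nonneg_right hlam (le_of_lt hns)
        have h2 : (-(k:ℝ)/s) * (-s) = k := by
          rw [neg_div, neg_mul_neg, div_mul_cancel₀]
          exact ne_of_lt hs
        linarith [h1, h2.le, h2.ge]
      have hI1 : ((k:ℝ) - lam - 1) = (-s-1)*((lam:ℝ)+1-s-μ) := by
        linear_combination (-1) * hs_root
      have hI2 : (k:ℝ) - μ = (-s)*((lam:ℝ)-s-μ) := by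
        linear_combination (-1) * hs_root
      have he1R : (1:ℝ) ≤ (k:ℝ) - lam - 1 := by
        have : ((lam:ℝ)+2) ≤ k := by exact_mod_cast he1
        linarith
      have hmukR : (μ:ℝ) ≤ k := by exact_mod_cast hmuk
      have ht1 : 1 < -s := by
        by_contra h
        push_neg at h
        have hp : -s - 1 ≤ 0 := by linarith
        have hq : (lam:ℝ)+1-s-μ < 0 := by
          by_contra hq'
          push_neg at hq'
          have : (-s-1)*((lam:ℝ)+1-s-μ) ≤ 0 := mul_nonpos_iff.2 (Or.inr ⟨hp, hq'⟩)
          linarith [hI1, he1R]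
        have hneg : (0:ℝ) < (-s) * (-((lam:ℝ)-s-μ)) := mul_pos hns (by linarith)
        nlinarith [hI2, hneg, hmukR]
      have hE1 : (μ:ℝ)*(-s-1) = s^2 - lam*s - k := by
        linear_combination (-1) * hs_root
      have hmut : (μ:ℝ) ≤ -s := by
        have hle : (μ:ℝ)*(-s-1) ≤ (-s)*(-s-1) := by nlinarith [hE1, hE2]
        exact le_of_mul_le_mul_right hle (by linarith)
      have hfin : (μ:ℝ) * ((lam:ℝ)+1) ≤ k := by
        nlinarith [mul_le_mul_of_nonneg_right hmut
          (show (0:ℝ) ≤ (lam:ℝ)+1 by positivity), hE2]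
      exact_mod_cast hfin
  constructor
  · refine ⟨by linarith [Int.natCast_nonneg lam], ⟨0, ?_⟩⟩
    have hval : cliqueAdjPolyInt v k lam 0 ((lam:ℤ) + 2 + 1)
        = -(((lam:ℤ)+3)*((lam:ℤ)+2)) := by
      unfold cliqueAdjPolyInt; ring
    rw [hval]
    nlinarith [Int.natCast_nonneg lam]
  · rintro c ⟨hc2, b, hcb⟩
    by_contra hlt
    push_neg at hlt
    have h0 : 0 ≤ cliqueAdjPolyInt v k lam b (c+1) := by
      unfold cliqueAdjPolyInt
      exact main_ineq v k lam μ (c+1) b (by omega) (by omega) hlamkZ hvkZ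
        (Int.natCast_nonneg μ) hpeZ
        (fun h => by
          have : μ = 0 := by exact_mod_cast h
          have := hmu0v this
          push_cast
          exact_mod_cast this) hkmZ
    exact absurd hcb (not_lt.2 h0)
end

section
/- Let Γ be a connected strongly regular graph with parameters (v, k, λ, μ), and suppose Γ is type II with distinct eigenvalues: there exist integers r and s with r > s, s < 0, r + s = λ − μ and r·s = μ − k. Let C(x, y) = x(x+1)(v−y) − 2xy(k−y+1) + y(y−1)(λ−y+2) be the clique adjacency polynomial of Γ. Suppose that λ + 1 ≤ −k/s (as rationals). Then C(1, λ + 2) ≥ 0, with equality if and only if λ = −k/s − 1. -/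
private lemma walk_adj {V : Type*} [Fintype V] [DecidableEq V] {G : SimpleGraph V}
    [DecidableRel G.Adj] {k lam : ℕ} {v : ℕ}
    (hsrg : G.IsSRGWith v k lam 0) :
    ∀ {u w : V}, G.Walk u w → u ≠ w → G.Adj u w := by
  intro u w p
  induction p with
  | nil => intro h; exact absurd rfl h
  | @cons a b c h p ih =>
    intro hne
    by_cases hbc : b = c
    · exact hbc ▸ h
    · have hbc' := ih hbc
      by_contra hadj
      have h0 : Fintype.card (G.commonNeighbors a c) = 0 := hsrg.of_not_adj hne hadj
      have : 0 < Fintype.card (G.commonNeighbors a c) :=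
        Fintype.card_pos_iff.mpr ⟨⟨b, h, hbc'.symm⟩⟩
      omega

/-- Lemma `lem:lam1le` for connected type-II strongly regular
graphs with distinct eigenvalues. -/
theorem stmt_17 {V : Type*} [Fintype V] [DecidableEq V] (G : SimpleGraph V) [DecidableRel G.Adj]
    (v k lam μ : ℕ) (hsrg : G.IsSRGWith v k lam μ)
    (hnoncomplete : G ≠ ⊤) (hedge : G ≠ ⊥)
    (hconn : G.Connected)
    (r s : ℤ) (hrs : s < r) (hs : s < 0)
    (hsum : r + s = (lam : ℤ) - μ) (hprod : r * s = (μ : ℤ) - k)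
    (hlam : (lam : ℚ) + 1 ≤ -(k : ℚ) / s) :
    0 ≤ cliqueAdjPolyInt v k lam 1 ((lam : ℤ) + 2) ∧
      (cliqueAdjPolyInt v k lam 1 ((lam : ℤ) + 2) = 0 ↔
        (lam : ℚ) = -(k : ℚ) / s - 1) := by
  -- μ > 0
  have hμpos : 0 < μ := by
    rcases Nat.eq_zero_or_pos μ with h0 | h; swap; · exact h
    subst h0
    apply absurd _ hnoncomplete
    ext u w
    simp only [SimpleGraph.top_adj]
    constructor
    · exact fun h => G.ne_of_adj h
    · intro hne
      exact walk_adj hsrg ((hconn u w).some) hne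
  -- there is a nonadjacent pair
  obtain ⟨u, w, hne, hnadj⟩ : ∃ u w : V, u ≠ w ∧ ¬ G.Adj u w := by
    by_contra hc
    push_neg at hc
    apply absurd _ hnoncomplete
    ext a b
    simp only [SimpleGraph.top_adj]
    exact ⟨fun h => G.ne_of_adj h, fun h => hc a b h⟩
  -- μ ≤ k
  have hμk : μ ≤ k := by
    have h1 := hsrg.of_not_adj hne hnadj
    have h2 := G.card_commonNeighbors_le_degree_left u w
    rw [h1, hsrg.regular u] at h2
    exact h2
  -- v ≥ k + 1
  have hvk : k + 1 ≤ v := by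
    have := G.degree_lt_card_verts u
    rw [hsrg.regular u, hsrg.card] at this
    omega
  have hvpos : 0 < v := by omega
  -- r ≥ 0
  have hr0 : 0 ≤ r := by nlinarith [hprod, hμk]
  -- k ≥ lam + 1  (in ℤ: (r+1)(s+1) = lam + 1 - k)
  have hkl : (lam : ℤ) + 1 ≤ (k : ℤ) := by nlinarith [hsum, hprod, hr0, hs]
  -- param identity in ℤ
  have hparam := SimpleGraph.IsSRGWith.param_eq G hsrg hvpos
  have hklN : lam + 1 ≤ k := by exact_mod_cast hkl
  have hparam' : (k : ℤ) * ((k : ℤ) - lam - 1) = ((v : ℤ) - k - 1) * μ := by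
    have h := congrArg (Nat.cast : ℕ → ℤ) hparam
    push_cast at h
    have e1 : ((k - lam - 1 : ℕ) : ℤ) = (k : ℤ) - lam - 1 := by omega
    have e2 : ((v - k - 1 : ℕ) : ℤ) = (v : ℤ) - k - 1 := by omega
    rw [e1, e2] at h
    exact h
  have hMZ : (0:ℤ) < (μ:ℤ) := by exact_mod_cast hμpos
  have hsQ : ((s:ℚ)) < 0 := by exact_mod_cast hs
  have hsQ0 : ((s:ℚ)) ≠ 0 := ne_of_lt hsQ
  have hC : cliqueAdjPolyInt v k lam 1 ((lam : ℤ) + 2)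
      = 2 * ((v:ℤ) - lam - 2 - ((lam:ℤ)+2)*((k:ℤ)-lam-1)) := by
    unfold cliqueAdjPolyInt; ring
  have hkey : ((v:ℤ) - lam - 2 - ((lam:ℤ)+2)*((k:ℤ)-lam-1)) * μ
      = ((r+1)*((μ:ℤ)+r)) * ((k:ℤ) + s*((lam:ℤ)+1)) := by
    have hM : (μ:ℤ) = (k:ℤ) + r*s := by linarith
    have hL : (lam:ℤ) = r + s + (k:ℤ) + r*s := by linarith
    rw [hL, hM] at hparam' ⊢
    linear_combination -hparam'
  have hpos : 0 < (r+1)*((μ:ℤ)+r) :=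
    mul_pos (by linarith) (by linarith)
  have hcond : 0 ≤ (k:ℤ) + s*((lam:ℤ)+1) := by
    rw [le_div_iff_of_neg hsQ] at hlam
    have : (0:ℚ) ≤ (k:ℚ) + s*((lam:ℚ)+1) := by nlinarith [hlam]
    exact_mod_cast this
  have hE : 0 ≤ (v:ℤ) - lam - 2 - ((lam:ℤ)+2)*((k:ℤ)-lam-1) := by
    nlinarith [mul_nonneg (le_of_lt hpos) hcond, hkey, hMZ]
  constructor
  · rw [hC]; linarith
  · rw [hC]
    constructor
    · intro h
      have hE0 : ((v:ℤ) - lam - 2 - ((lam:ℤ)+2)*((k:ℤ)-lam-1)) = 0 := by linarith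
      have h2 : ((r+1)*((μ:ℤ)+r)) * ((k:ℤ) + s*((lam:ℤ)+1)) = 0 := by
        rw [← hkey, hE0, zero_mul]
      have h3 : (k:ℤ) + s*((lam:ℤ)+1) = 0 := by
        rcases mul_eq_zero.mp h2 with h | h
        · exact absurd h (ne_of_gt hpos)
        · exact h
      have h4 : (k:ℚ) + s*((lam:ℚ)+1) = 0 := by exact_mod_cast h3
      field_simp
      linear_combination h4
    · intro h
      have h4 : (k:ℚ) + s*((lam:ℚ)+1) = 0 := by
        rw [h]; field_simp; ring
      have h3 : (k:ℤ) + s*((lam:ℤ)+1) = 0 := by exact_mod_cast h4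
      have h2 : ((v:ℤ) - lam - 2 - ((lam:ℤ)+2)*((k:ℤ)-lam-1)) * μ = 0 := by
        rw [hkey, h3, mul_zero]
      rcases mul_eq_zero.mp h2 with h | h
      · rw [h, mul_zero]
      · exact absurd h (ne_of_gt hMZ)
end

section
/- Let Γ be an edge-regular graph with parameters (v, k, λ), and let C(x, y) = x(x+1)(v−y) − 2xy(k−y+1) + y(y−1)(λ−y+2) be its clique adjacency polynomial. Suppose that C(b, λ + 2) ≥ 0 for all integers b. Then C(b, c) ≥ 0 for every integer c with 2 ≤ c ≤ λ + 2 and every integer b. -/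
/-- Lemma `lem:NoOtherZeros` for edge-regular graphs. -/
theorem stmt_18 {V : Type*} [Fintype V] [DecidableEq V] (G : SimpleGraph V) [DecidableRel G.Adj]
    (v k lam : ℕ)
    (hcard : Fintype.card V = v)
    (hreg : G.IsRegularOfDegree k)
    (hedge : G ≠ ⊥)
    (hadj : ∀ a b : V, G.Adj a b → Fintype.card (G.commonNeighbors a b) = lam)
    (hnn : ∀ b : ℤ, 0 ≤ cliqueAdjPolyInt v k lam b ((lam : ℤ) + 2)) :
    ∀ c : ℤ, 2 ≤ c → c ≤ (lam : ℤ) + 2 → ∀ b : ℤ, 0 ≤ cliqueAdjPolyInt v k lam b c := by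
  -- extract an edge
  obtain ⟨e, he⟩ := (SimpleGraph.edgeSet_nonempty (G := G)).2 hedge
  induction e using Sym2.ind with
  | _ a b =>
    rw [SimpleGraph.mem_edgeSet] at he
    -- k ≥ lam + 1
    have hk : lam + 1 ≤ k := by
      have := he.card_commonNeighbors_lt_degree
      rw [hadj a b he, hreg a] at this
      omega
    -- v ≥ k + 1
    have hv : k + 1 ≤ v := by
      have := G.degree_lt_card_verts a
      rw [hreg a, hcard] at this
      omega
    have hkZ : (lam : ℤ) + 1 ≤ (k : ℤ) := by exact_mod_cast hk
    have hvZ : (k : ℤ) + 1 ≤ (v : ℤ) := by exact_mod_cast hv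
    intro c hc2 hcl b
    rcases le_or_gt b 0 with hb | hb
    · -- all three terms nonneg
      unfold cliqueAdjPolyInt
      have h1 : 0 ≤ b * (b + 1) * ((v : ℤ) - c) := by
        have : 0 ≤ b * (b + 1) := by rcases le_or_gt (-1) b with h | h <;> nlinarith
        nlinarith
      have h2 : 0 ≤ -(2 * b * c * ((k : ℤ) - c + 1)) := by
        nlinarith [mul_nonneg (mul_nonneg (by linarith : (0:ℤ) ≤ -b) (by linarith : (0:ℤ) ≤ c))
          (by linarith : (0:ℤ) ≤ (k : ℤ) - c + 1)]
      have h3 : 0 ≤ c * (c - 1) * ((lam : ℤ) - c + 2) :=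
        mul_nonneg (mul_nonneg (by linarith) (by linarith)) (by linarith)
      linarith
    · have key : cliqueAdjPolyInt v k lam b c =
          cliqueAdjPolyInt v k lam b ((lam : ℤ) + 2) +
            ((lam : ℤ) + 2 - c) * ((b - c) * (b - c + 1) + 2 * b * ((k : ℤ) - lam - 1)) := by
        unfold cliqueAdjPolyInt; ring
      have h1 : 0 ≤ (b - c) * (b - c + 1) := by
        rcases le_or_gt c b with h | h
        · nlinarith
        · have : b - c + 1 ≤ 0 := by omega
          nlinarith
      have h2 : 0 ≤ 2 * b * ((k : ℤ) - lam - 1) := by nlinarith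
      have := hnn b
      nlinarith [mul_nonneg (by linarith : (0:ℤ) ≤ (lam : ℤ) + 2 - c) (add_nonneg h1 h2)]
end

section
/- Let Γ be a strongly regular graph with parameters (v, k, λ, μ), and let r ≥ s be the real roots of x² − (λ−μ)x − (k−μ) (the eigenvalues of Γ other than k), with s < 0. Then the clique number of Γ satisfies ω(Γ) ≤ ⌊1 − k/s⌋ (the Delsarte bound). -/
open Finset SimpleGraph

set_option maxHeartbeats 1000000 in
/-- the Delsarte bound `ω(Γ) ≤ ⌊1 − k/s⌋` for strongly regular
graphs. -/
theorem stmt_19 {V : Type*} [Fintype V] [DecidableEq V] (G : SimpleGraph V) [DecidableRel G.Adj]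
    (v k lam μ : ℕ) (hsrg : G.IsSRGWith v k lam μ)
    (hnoncomplete : G ≠ ⊤) (hedge : G ≠ ⊥)
    (r s : ℝ) (hrs : s ≤ r) (hs : s < 0)
    (hr_root : r ^ 2 - ((lam : ℝ) - μ) * r - ((k : ℝ) - μ) = 0)
    (hs_root : s ^ 2 - ((lam : ℝ) - μ) * s - ((k : ℝ) - μ) = 0) :
    (G.cliqueNum : ℤ) ≤ ⌊1 - (k : ℝ) / s⌋ := by
  classical
  obtain ⟨t, ht⟩ := G.exists_isNClique_cliqueNum
  set c := G.cliqueNum with hc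
  have htc : t.card = c := ht.2
  have hadj : ∀ u ∈ t, ∀ z ∈ t, u ≠ z → G.Adj u z := by
    intro u hu z hz hne
    exact ht.1 (Finset.mem_coe.2 hu) (Finset.mem_coe.2 hz) hne
  -- an edge exists
  have hex : ∃ x y, G.Adj x y := by
    by_contra h
    push_neg at h
    exact hedge (by ext x y; simp [h x y])
  obtain ⟨x₀, y₀, hxy⟩ := hex
  have hk1 : 1 ≤ k := by
    have hreg := hsrg.regular x₀
    have hmem : y₀ ∈ G.neighborFinset x₀ := by simpa using hxy
    have hpos := Finset.card_pos.2 ⟨y₀, hmem⟩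
    rw [G.card_neighborFinset_eq_degree, hreg] at hpos
    omega
  -- c ≥ 2
  have hc2 : 2 ≤ c := by
    have hclq : G.IsClique ({x₀, y₀} : Finset V) := by
      rw [show ((({x₀, y₀} : Finset V) : Set V)) = {x₀, y₀} by simp]
      exact SimpleGraph.isClique_pair.2 (fun _ => hxy)
    have := @SimpleGraph.IsClique.card_le_cliqueNum V G _ {x₀, y₀} hclq
    rwa [Finset.card_pair hxy.ne] at this
  -- trivial bound c ≤ k + 1
  have hck : c ≤ k + 1 := by
    obtain ⟨u, hu⟩ := Finset.card_pos.1 (show 0 < t.card by omega)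
    have hsub : t.erase u ⊆ G.neighborFinset u := by
      intro z hz
      rw [SimpleGraph.mem_neighborFinset]
      exact hadj u hu z (Finset.mem_of_mem_erase hz) (Ne.symm (Finset.ne_of_mem_erase hz))
    have := Finset.card_le_card hsub
    rw [Finset.card_erase_of_mem hu, G.card_neighborFinset_eq_degree, hsrg.regular u, htc] at this
    omega
  have hvV : Fintype.card V = v := hsrg.card
  have hkv : k + 1 ≤ v := by
    have := G.degree_lt_card_verts x₀
    rw [hsrg.regular x₀, hvV] at this
    omega
  -- lam + 1 ≤ k
  have hlamk : lam + 1 ≤ k := by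
    have h1 := hxy.card_commonNeighbors_lt_degree
    rw [hsrg.of_adj _ _ hxy, hsrg.regular x₀] at h1
    omega
  -- μ ≤ k
  have hnadj : ∃ a b, a ≠ b ∧ ¬ G.Adj a b := by
    by_contra h
    push_neg at h
    refine hnoncomplete ?_
    ext a b
    simp only [SimpleGraph.top_adj]
    exact ⟨fun hab => hab.ne, fun hab => h a b hab⟩
  obtain ⟨a, b, hab, hnab⟩ := hnadj
  have hμk : μ ≤ k := by
    have h1 := G.card_commonNeighbors_le_degree_left a b
    rw [hsrg.of_not_adj hab hnab, hsrg.regular a] at h1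
    exact h1
  rw [Int.le_floor]
  push_cast
  by_cases hs1 : -1 ≤ s
  · -- easy case: bound exceeds k + 1
    have hkR : (0:ℝ) ≤ (k:ℝ) := by positivity
    have h1 : (k:ℝ) ≤ k / (-s) := by
      rw [le_div_iff₀ (by linarith : (0:ℝ) < -s)]
      nlinarith
    have h2 : (k:ℝ) / (-s) = -((k:ℝ)/s) := by rw [div_neg]
    have h3 : (c:ℝ) ≤ (k:ℝ) + 1 := by exact_mod_cast hck
    linarith
  · push_neg at hs1
    -- μ ≥ 1
    have hpe := hsrg.param_eq G (show 0 < v by omega)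
    have hμ1 : 1 ≤ μ := by
      by_contra h
      push_neg at h
      have hμ0 : μ = 0 := by omega
      have hz : k * (k - lam - 1) = 0 := by rw [hpe, hμ0, Nat.mul_zero]
      have hkl : k = lam + 1 := by
        rcases Nat.mul_eq_zero.1 hz with h' | h' <;> omega
      have hμR : (μ:ℝ) = 0 := by exact_mod_cast hμ0
      have hkR : (k:ℝ) = (lam:ℝ) + 1 := by exact_mod_cast hkl
      rw [hμR, hkR] at hs_root
      have hq : (s + 1) * (s - ((lam:ℝ) + 1)) = 0 := by linear_combination hs_root
      have hlam0 : (0:ℝ) ≤ (lam:ℝ) := by positivity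
      nlinarith [hq]
    -- the counting argument
    set d : V → ℕ := fun x => (t.filter (fun u => G.Adj x u)).card with hd
    have hinter : ∀ u ∈ t, G.neighborFinset u ∩ t = t.erase u := by
      intro u hu
      ext z
      simp only [Finset.mem_inter, SimpleGraph.mem_neighborFinset, Finset.mem_erase]
      constructor
      · rintro ⟨haz, hzt⟩
        exact ⟨haz.ne', hzt⟩
      · rintro ⟨hne, hzt⟩
        exact ⟨hadj u hu z hzt (Ne.symm hne), hzt⟩
    -- Lemma A : ∑ d + c(c-1) = c k
    have hA : (∑ x ∈ tᶜ, d x) + c * (c - 1) = c * k := by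
      have swap : ∑ x ∈ tᶜ, d x = ∑ u ∈ t, (tᶜ.filter fun x => G.Adj x u).card := by
        simp_rw [hd, Finset.card_filter]
        exact Finset.sum_comm
      have per : ∀ u ∈ t, (tᶜ.filter fun x => G.Adj x u).card + (c - 1) = k := by
        intro u hu
        have h1 : tᶜ.filter (fun x => G.Adj x u) = G.neighborFinset u \ t := by
          ext z
          simp only [Finset.mem_filter, Finset.mem_sdiff, Finset.mem_compl,
            SimpleGraph.mem_neighborFinset]
          rw [G.adj_comm]
          tauto
        rw [h1]
        have h2 := Finset.card_sdiff_add_card_inter (G.neighborFinset u) t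
        rw [hinter u hu, Finset.card_erase_of_mem hu, htc,
          G.card_neighborFinset_eq_degree, hsrg.regular u] at h2
        omega
      calc (∑ x ∈ tᶜ, d x) + c * (c - 1)
          = (∑ u ∈ t, (tᶜ.filter fun x => G.Adj x u).card) + ∑ _u ∈ t, (c - 1) := by
            rw [swap, Finset.sum_const, htc, smul_eq_mul]
        _ = ∑ u ∈ t, ((tᶜ.filter fun x => G.Adj x u).card + (c - 1)) :=
            Finset.sum_add_distrib.symm
        _ = ∑ _u ∈ t, k := Finset.sum_congr rfl per
        _ = c * k := by rw [Finset.sum_const, htc, smul_eq_mul]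
    -- Lemma B : ∑ d² + c(c-1)(c-2) = ∑ d + c(c-1) lam
    have hB : (∑ x ∈ tᶜ, d x * d x) + c * (c - 1) * (c - 2)
        = (∑ x ∈ tᶜ, d x) + c * (c - 1) * lam := by
      have hdd : ∀ x : V, d x * d x
          = d x + (t.offDiag.filter (fun q => G.Adj x q.1 ∧ G.Adj x q.2)).card := by
        intro x
        have hoff : (t.filter (fun u => G.Adj x u)).offDiag
            = t.offDiag.filter (fun q => G.Adj x q.1 ∧ G.Adj x q.2) := by
          ext ⟨u, w⟩
          simp only [Finset.mem_offDiag, Finset.mem_filter]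
          tauto
        rw [← hoff, Finset.offDiag_card]
        have hcard : #(t.filter fun u => G.Adj x u) = d x := rfl
        rw [hcard]
        have hle : d x ≤ d x * d x := by
          rcases Nat.eq_zero_or_pos (d x) with h0 | h0
          · simp [h0]
          · calc d x = d x * 1 := (Nat.mul_one _).symm
              _ ≤ d x * d x := Nat.mul_le_mul_left _ h0
        omega
      have swap2 : ∑ x ∈ tᶜ, (t.offDiag.filter (fun q => G.Adj x q.1 ∧ G.Adj x q.2)).card
          = ∑ q ∈ t.offDiag, (tᶜ.filter (fun x => G.Adj x q.1 ∧ G.Adj x q.2)).card := by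
        simp_rw [Finset.card_filter]
        exact Finset.sum_comm
      have per2 : ∀ q ∈ t.offDiag,
          (tᶜ.filter (fun x => G.Adj x q.1 ∧ G.Adj x q.2)).card + (c - 2) = lam := by
        rintro ⟨u, w⟩ hq
        rw [Finset.mem_offDiag] at hq
        obtain ⟨hu, hw, huw⟩ := hq
        have hadj_uw : G.Adj u w := hadj u hu w hw huw
        have hset : tᶜ.filter (fun x => G.Adj x u ∧ G.Adj x w)
            = (G.commonNeighbors u w).toFinset \ t := by
          ext z
          simp only [Finset.mem_filter, Finset.mem_sdiff, Finset.mem_compl,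
            Set.mem_toFinset, SimpleGraph.mem_commonNeighbors]
          rw [G.adj_comm z u, G.adj_comm z w]
          tauto
        have hins : (G.commonNeighbors u w).toFinset ∩ t = (t.erase u).erase w := by
          ext z
          simp only [Finset.mem_inter, Set.mem_toFinset, SimpleGraph.mem_commonNeighbors,
            Finset.mem_erase]
          constructor
          · rintro ⟨⟨h1, h2⟩, hzt⟩
            exact ⟨h2.ne', ⟨h1.ne', hzt⟩⟩
          · rintro ⟨hzw, hzu, hzt⟩
            exact ⟨⟨hadj u hu z hzt (Ne.symm hzu), hadj w hw z hzt (Ne.symm hzw)⟩, hzt⟩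
        have hcd := Finset.card_sdiff_add_card_inter ((G.commonNeighbors u w).toFinset) t
        rw [hins, Finset.card_erase_of_mem (Finset.mem_erase.2 ⟨Ne.symm huw, hw⟩),
          Finset.card_erase_of_mem hu, htc, Set.toFinset_card,
          hsrg.of_adj u w hadj_uw] at hcd
        rw [hset]
        omega
      have hsum2 : (∑ q ∈ t.offDiag, (tᶜ.filter (fun x => G.Adj x q.1 ∧ G.Adj x q.2)).card)
          + t.offDiag.card * (c - 2) = t.offDiag.card * lam := by
        calc (∑ q ∈ t.offDiag, (tᶜ.filter (fun x => G.Adj x q.1 ∧ G.Adj x q.2)).card)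
            + t.offDiag.card * (c - 2)
            = ∑ q ∈ t.offDiag, ((tᶜ.filter (fun x => G.Adj x q.1 ∧ G.Adj x q.2)).card + (c - 2)) := by
              rw [Finset.sum_add_distrib, Finset.sum_const, smul_eq_mul]
          _ = ∑ _q ∈ t.offDiag, lam := Finset.sum_congr rfl per2
          _ = t.offDiag.card * lam := by rw [Finset.sum_const, smul_eq_mul]
      have hocard : t.offDiag.card = c * (c - 1) := by
        rw [Finset.offDiag_card, htc]
        cases c with
        | zero => simp
        | succ n => simp [Nat.succ_sub_one, Nat.mul_succ, Nat.succ_mul]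
      have hstep : ∑ x ∈ tᶜ, d x * d x
          = (∑ x ∈ tᶜ, d x)
            + ∑ q ∈ t.offDiag, (tᶜ.filter (fun x => G.Adj x q.1 ∧ G.Adj x q.2)).card := by
        rw [← swap2, ← Finset.sum_add_distrib]
        exact Finset.sum_congr rfl fun x _ => hdd x
      rw [hstep, ← hocard]
      omega
    -- Cauchy–Schwarz
    have hCS0 : ((∑ x ∈ tᶜ, (d x : ℝ)))^2 ≤ (tᶜ.card : ℝ) * ∑ x ∈ tᶜ, (d x : ℝ)^2 :=
      sq_sum_le_card_mul_sum_sq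
    have hcv : c ≤ v := by
      have := Finset.card_le_univ t
      rw [htc, hvV] at this
      exact this
    have hccard : (tᶜ.card : ℕ) = v - c := by
      rw [Finset.card_compl, htc, hvV]
    -- abbreviations for the two counting sums
    set SD : ℕ := ∑ x ∈ tᶜ, d x with hSD
    set SQ : ℕ := ∑ x ∈ tᶜ, d x * d x with hSQ
    -- real versions of the counting facts
    have hCS : ((SD : ℝ))^2 ≤ ((v:ℝ) - (c:ℝ)) * (SQ : ℝ) := by
      have h1 : ((tᶜ.card : ℕ) : ℝ) = (v:ℝ) - (c:ℝ) := by
        rw [hccard, Nat.cast_sub hcv]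
      have h2 : ((SD : ℝ)) = ∑ x ∈ tᶜ, (d x : ℝ) := by rw [hSD]; push_cast; rfl
      have h3 : ((SQ : ℝ)) = ∑ x ∈ tᶜ, (d x : ℝ)^2 := by
        rw [hSQ]; push_cast [sq]; rfl
      rw [h2, h3, ← h1]
      exact hCS0
    have hc1R : ((c - 1 : ℕ) : ℝ) = (c:ℝ) - 1 := by
      push_cast [Nat.cast_sub (show 1 ≤ c by omega)]; ring
    have hc2R : ((c - 2 : ℕ) : ℝ) = (c:ℝ) - 2 := by
      push_cast [Nat.cast_sub (show 2 ≤ c by omega)]; ring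
    have eA : (SD:ℝ) + (c:ℝ) * ((c:ℝ) - 1) = (c:ℝ) * (k:ℝ) := by
      calc (SD:ℝ) + (c:ℝ) * ((c:ℝ) - 1) = ((SD + c * (c-1) : ℕ) : ℝ) := by
            push_cast [hc1R]; ring
        _ = ((c * k : ℕ) : ℝ) := by rw [hA]
        _ = (c:ℝ) * (k:ℝ) := by push_cast; ring
    have eB : (SQ:ℝ) + (c:ℝ) * ((c:ℝ) - 1) * ((c:ℝ) - 2)
        = (SD:ℝ) + (c:ℝ) * ((c:ℝ) - 1) * (lam:ℝ) := by
      calc (SQ:ℝ) + (c:ℝ) * ((c:ℝ) - 1) * ((c:ℝ) - 2)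
          = ((SQ + c * (c-1) * (c-2) : ℕ) : ℝ) := by
            push_cast [hc1R, hc2R]; ring
        _ = ((SD + c * (c-1) * lam : ℕ) : ℝ) := by rw [hB]
        _ = (SD:ℝ) + (c:ℝ) * ((c:ℝ) - 1) * (lam:ℝ) := by
            push_cast [hc1R]; ring
    have epe : (k:ℝ) * ((k:ℝ) - (lam:ℝ) - 1) = ((v:ℝ) - (k:ℝ) - 1) * (μ:ℝ) := by
      have hx1 : ((k - lam - 1 : ℕ) : ℝ) = (k:ℝ) - (lam:ℝ) - 1 := by
        push_cast [Nat.cast_sub (show 1 ≤ k - lam by omega),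
          Nat.cast_sub (show lam ≤ k by omega)]
        ring
      have hx2 : ((v - k - 1 : ℕ) : ℝ) = (v:ℝ) - (k:ℝ) - 1 := by
        push_cast [Nat.cast_sub (show 1 ≤ v - k by omega),
          Nat.cast_sub (show k ≤ v by omega)]
        ring
      calc (k:ℝ) * ((k:ℝ) - (lam:ℝ) - 1) = ((k * (k - lam - 1) : ℕ) : ℝ) := by
            push_cast [hx1]; ring
        _ = (((v - k - 1) * μ : ℕ) : ℝ) := by rw [hpe]
        _ = ((v:ℝ) - (k:ℝ) - 1) * (μ:ℝ) := by rw [Nat.cast_mul, hx2]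
    -- the second eigenvalue
    set r2 : ℝ := (lam:ℝ) - (μ:ℝ) - s with hr2
    have hlameq : (lam:ℝ) = (μ:ℝ) + r2 + s := by rw [hr2]; ring
    have hsr : s * r2 = (μ:ℝ) - (k:ℝ) := by
      rw [hr2]; linear_combination -hs_root
    have hr20 : 0 ≤ r2 := by
      by_contra hneg
      push_neg at hneg
      have hmk : (μ:ℝ) ≤ (k:ℝ) := by exact_mod_cast hμk
      have hp : 0 < s * r2 := by
        calc (0:ℝ) < (-s) * (-r2) := mul_pos (neg_pos.2 hs) (neg_pos.2 hneg)
          _ = s * r2 := by ring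
      linarith
    -- the key algebraic identity
    have key : (μ:ℝ) * (((v:ℝ) - (c:ℝ)) * (SQ:ℝ) - (SD:ℝ)^2)
        = ((-(s+1)) * ((r2+1) * ((c:ℝ) * ((k:ℝ) + ((c:ℝ)-1)*r2)))) * ((k:ℝ) + ((c:ℝ)-1)*s) := by
      linear_combination
        ((-1)*(c:ℝ)*(μ:ℝ) + (1)*(v:ℝ)*(μ:ℝ)) * eB
        + ((-2)*(c:ℝ)*(μ:ℝ) + (-1)*(c:ℝ)*(k:ℝ)*(μ:ℝ) + (1)*(c:ℝ)^2*(μ:ℝ) + (1)*(v:ℝ)*(μ:ℝ)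
            + (-1)*(SD:ℝ)*(μ:ℝ)) * eA
        + ((1)*(c:ℝ) + (1)*(c:ℝ)*(lam:ℝ) + (-1)*(c:ℝ)*(k:ℝ) + (-2)*(c:ℝ)^2
            + (-1)*(c:ℝ)^2*(lam:ℝ) + (1)*(c:ℝ)^3) * epe
        + ((-1)*(c:ℝ)*(μ:ℝ) + (2)*(c:ℝ)*(k:ℝ) + (1)*(c:ℝ)*(k:ℝ)*r2 + (1)*(c:ℝ)*(k:ℝ)*s
            + (1)*(c:ℝ)*(k:ℝ)*(lam:ℝ) + (-2)*(c:ℝ)*(k:ℝ)^2 + (2)*(c:ℝ)^2*(μ:ℝ)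
            + (-3)*(c:ℝ)^2*(k:ℝ) + (-1)*(c:ℝ)^2*(k:ℝ)*r2 + (-1)*(c:ℝ)^2*(k:ℝ)*s
            + (-1)*(c:ℝ)^2*(k:ℝ)*(lam:ℝ) + (1)*(c:ℝ)^2*(k:ℝ)^2 + (-1)*(c:ℝ)^3*(μ:ℝ)
            + (1)*(c:ℝ)^3*(k:ℝ)) * hlameq
        + ((1)*(c:ℝ) + (1)*(c:ℝ)*r2 + (1)*(c:ℝ)*s + (1)*(c:ℝ)*s*r2 + (1)*(c:ℝ)*(μ:ℝ)
            + (-1)*(c:ℝ)*(k:ℝ) + (-1)*(c:ℝ)*(k:ℝ)*r2 + (-1)*(c:ℝ)*(k:ℝ)*s + (1)*(c:ℝ)*(k:ℝ)^2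
            + (-2)*(c:ℝ)^2 + (-2)*(c:ℝ)^2*r2 + (-2)*(c:ℝ)^2*s + (-2)*(c:ℝ)^2*s*r2
            + (-2)*(c:ℝ)^2*(μ:ℝ) + (2)*(c:ℝ)^2*(k:ℝ) + (1)*(c:ℝ)^2*(k:ℝ)*r2
            + (1)*(c:ℝ)^2*(k:ℝ)*s + (1)*(c:ℝ)^3 + (1)*(c:ℝ)^3*r2 + (1)*(c:ℝ)^3*s
            + (1)*(c:ℝ)^3*s*r2 + (1)*(c:ℝ)^3*(μ:ℝ) + (-1)*(c:ℝ)^3*(k:ℝ)) * hsr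
    -- sign analysis: k + (c-1) s ≥ 0
    have hcR2 : (2:ℝ) ≤ (c:ℝ) := by exact_mod_cast hc2
    have hkR1 : (1:ℝ) ≤ (k:ℝ) := by exact_mod_cast hk1
    have hmuR1 : (1:ℝ) ≤ (μ:ℝ) := by exact_mod_cast hμ1
    have hBge : 0 ≤ (k:ℝ) + ((c:ℝ) - 1) * s := by
      by_contra hBlt
      push_neg at hBlt
      have hP : 0 < (-(s+1)) * ((r2+1) * ((c:ℝ) * ((k:ℝ) + ((c:ℝ)-1)*r2))) := by
        have h1 : 0 < -(s+1) := by linarith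
        have h2 : 0 < r2 + 1 := by linarith
        have h3 : 0 < (c:ℝ) := by linarith
        have h4 : 0 < (k:ℝ) + ((c:ℝ)-1)*r2 := by nlinarith
        exact mul_pos h1 (mul_pos h2 (mul_pos h3 h4))
      have hneg2 : ((-(s+1)) * ((r2+1) * ((c:ℝ) * ((k:ℝ) + ((c:ℝ)-1)*r2))))
          * ((k:ℝ) + ((c:ℝ)-1)*s) < 0 := mul_neg_of_pos_of_neg hP hBlt
      have hnn : 0 ≤ (μ:ℝ) * (((v:ℝ) - (c:ℝ)) * (SQ:ℝ) - (SD:ℝ)^2) := by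
        have hx : 0 ≤ ((v:ℝ) - (c:ℝ)) * (SQ:ℝ) - (SD:ℝ)^2 := by linarith
        exact mul_nonneg (by linarith) hx
      rw [key] at hnn
      linarith
    -- conclude
    have h2 : (c:ℝ) - 1 ≤ (k:ℝ) / (-s) := by
      rw [le_div_iff₀ (by linarith : (0:ℝ) < -s)]
      nlinarith
    have h3 : (k:ℝ) / (-s) = -((k:ℝ)/s) := by rw [div_neg]
    linarith
end
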